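/- arXiv:1701.08394 — 7 statements merged into one kernel-verified Lean document; each statement's English description precedes it below -/
import Mathlib

section
/- For σ ≥ 1 and n < k ≤ (σ+1)n, E_σ(n,k) = (k!/(k-n)) · Σ_{i=1}^{min(σ, k-n)} ((n+1)i - k + n) / ((i+1)! (k-i)!) · E_σ(n, k-i). -/
/-!
Double counting. Removing a block of size `j` from a partition of an `m`-set into `n + 1`
blocks of size at most `σ + 1` leaves such a partition of the other `m - j` points into `n`
blocks, so `∑ⱼ w(j) C(m, j) E_σ(n, m - j)` counts the partitions into `n + 1` blocks with each
block `B` weighted by `w(|B|)`. With `w = 1` and `w = id` this gives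
`∑ⱼ C(m, j) E_σ(n, m - j) = (n + 1) E_σ(n + 1, m)` and
`∑ⱼ j C(m, j) E_σ(n, m - j) = m E_σ(n + 1, m)`, hence
`∑ⱼ ((n + 1) j - m) C(m, j) E_σ(n, m - j) = 0`. At `m = k + 1` the term `j = 1` is
`-(k - n)(k + 1) E_σ(n, k)`, and the terms with `j - 1 > k - n` vanish.
-/

/-- `E σ n k` is the number of set partitions of `{1,...,k}` into exactly `n`
nonempty blocks, each of size at most `σ + 1`. -/
noncomputable def E (σ n k : ℕ) : ℕ :=
  Nat.card {P : Finpartition (Finset.univ : Finset (Fin k)) //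
    P.parts.card = n ∧ ∀ p ∈ P.parts, p.card ≤ σ + 1}

/-- `G σ n = ∑_{k=n}^{(σ+1)n} E σ n k`. -/
noncomputable def G (σ n : ℕ) : ℕ := ∑ k ∈ Finset.Icc n ((σ + 1) * n), E σ n k

open Finset

namespace Finset

theorem map_filter_mem_of_subset_map {α β : Type*} [DecidableEq β] {s : Finset α} (f : α ↪ β)
    {t : Finset β} (ht : t ⊆ s.map f) :
    (s.filter (f · ∈ t)).map f = t := by
  ext b
  simp only [mem_map, mem_filter]
  constructor
  · rintro ⟨a, ⟨-, ha⟩, rfl⟩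
    exact ha
  · intro hb
    obtain ⟨a, ha, rfl⟩ := mem_map.1 (ht hb)
    exact ⟨a, ⟨ha, hb⟩, rfl⟩

end Finset

namespace Finpartition

section Embedding

variable {α β : Type*} [DecidableEq α] [DecidableEq β] {s : Finset α}

def pushforward (f : α ↪ β) (P : Finpartition s) : Finpartition (s.map f) where
  parts := P.parts.map (mapEmbedding f).toEmbedding
  supIndep := by
    rw [supIndep_iff_pairwiseDisjoint, coe_map]
    rintro _ ⟨p, hp, rfl⟩ _ ⟨q, hq, rfl⟩ hpq
    exact (disjoint_map f).2 (P.disjoint hp hq fun h => hpq (h ▸ rfl))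
  sup_parts := by
    ext b
    simp only [mem_sup, mem_map, RelEmbedding.coe_toEmbedding, mapEmbedding_apply, id_eq]
    constructor
    · rintro ⟨_, ⟨p, hp, rfl⟩, hb⟩
      obtain ⟨a, ha, rfl⟩ := mem_map.1 hb
      exact ⟨a, P.subset hp ha, rfl⟩
    · rintro ⟨a, ha, rfl⟩
      obtain ⟨p, hp, hap⟩ := P.exists_mem ha
      exact ⟨_, ⟨p, hp, rfl⟩, mem_map_of_mem f hap⟩
  bot_notMem := by
    simp only [bot_eq_empty, mem_map, RelEmbedding.coe_toEmbedding, mapEmbedding_apply,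
      map_eq_empty]
    rintro ⟨p, hp, rfl⟩
    exact P.empty_notMem_parts hp

@[simp]
theorem parts_pushforward (f : α ↪ β) (P : Finpartition s) :
    (P.pushforward f).parts = P.parts.map (mapEmbedding f).toEmbedding := rfl

theorem pushforward_injective (f : α ↪ β) :
    Function.Injective (pushforward (s := s) f) := fun _ _ h =>
  Finpartition.ext <| map_injective _ <| congrArg parts h

def pullback (f : α ↪ β) (Q : Finpartition (s.map f)) : Finpartition s :=
  ofExistsUnique (Q.parts.image fun q => s.filter (f · ∈ q)) (by simp)
    (by
      intro a ha
      obtain ⟨q, ⟨hq, hfa⟩, huniq⟩ := Q.existsUnique_mem (mem_map_of_mem f ha)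
      refine ⟨_, ⟨mem_image_of_mem _ hq, mem_filter.2 ⟨ha, hfa⟩⟩, ?_⟩
      rintro _ ⟨hr, har⟩
      obtain ⟨r, hr', rfl⟩ := mem_image.1 hr
      rw [huniq r ⟨hr', (mem_filter.1 har).2⟩])
    (by
      simp only [mem_image, not_exists, not_and]
      intro q hq he
      apply Q.empty_notMem_parts
      rwa [← Finset.map_filter_mem_of_subset_map f (Q.subset hq), he, map_empty] at hq)

theorem pushforward_pullback (f : α ↪ β) (Q : Finpartition (s.map f)) :
    (Q.pullback f).pushforward f = Q := by
  ext q
  simp only [pullback, parts_pushforward, ofExistsUnique_parts, mem_map, mem_image,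
    RelEmbedding.coe_toEmbedding, mapEmbedding_apply]
  constructor
  · rintro ⟨_, ⟨r, hr, rfl⟩, rfl⟩
    rwa [Finset.map_filter_mem_of_subset_map f (Q.subset hr)]
  · intro hq
    exact ⟨_, ⟨q, hq, rfl⟩, Finset.map_filter_mem_of_subset_map f (Q.subset hq)⟩

end Embedding

section GeneralizedBooleanAlgebra

variable {α : Type*} [GeneralizedBooleanAlgebra α] {a b : α}

theorem notMem_parts_of_sdiff (Q : Finpartition (a \ b)) (hb : b ≠ ⊥) : b ∉ Q.parts :=
  fun h => hb (disjoint_sdiff_self_left.mono_left (Q.le h) |>.eq_bot_of_le le_rfl)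

variable [DecidableEq α]

theorem parts_avoid_of_mem (P : Finpartition a) (hb : b ∈ P.parts) :
    (P.avoid b).parts = P.parts.erase b := by
  ext c
  rw [mem_avoid, mem_erase]
  constructor
  · rintro ⟨d, hd, hdb, rfl⟩
    have hne : d ≠ b := fun h => hdb h.le
    have hdisj : Disjoint d b := P.disjoint hd hb hne
    rw [hdisj.sdiff_eq_left]
    exact ⟨hne, hd⟩
  · rintro ⟨hne, hc⟩
    have hdisj : Disjoint c b := P.disjoint hc hb hne
    exact ⟨c, hc, fun hle => P.ne_bot hc (hdisj.eq_bot_of_le hle), hdisj.sdiff_eq_left⟩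

theorem parts_extendOfLE_sdiff (Q : Finpartition (a \ b)) (hba : b ≤ a) (hb : b ≠ ⊥) :
    (Q.extendOfLE sdiff_le).parts = insert b Q.parts := by
  rw [parts_extendOfLE_of_lt _ (sdiff_lt hba hb), sdiff_sdiff_eq_self hba]

end GeneralizedBooleanAlgebra

end Finpartition

section BoundedPartitions

variable {α β : Type*} [DecidableEq α] [DecidableEq β]

def boundedPartitions (σ n : ℕ) (s : Finset α) : Finset (Finpartition s) :=
  {P | #P.parts = n ∧ ∀ p ∈ P.parts, #p ≤ σ + 1}

@[simp]
theorem mem_boundedPartitions {σ n : ℕ} {s : Finset α} {P : Finpartition s} :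
    P ∈ boundedPartitions σ n s ↔ #P.parts = n ∧ ∀ p ∈ P.parts, #p ≤ σ + 1 := by
  simp [boundedPartitions]

theorem card_boundedPartitions_map (σ n : ℕ) (f : α ↪ β) (s : Finset α) :
    #(boundedPartitions σ n (s.map f)) = #(boundedPartitions σ n s) := by
  refine (card_nbij (Finpartition.pushforward f) ?_ (Finpartition.pushforward_injective f).injOn
    ?_).symm
  · intro P hP
    simpa using hP
  · intro Q hQ
    refine ⟨Q.pullback f, ?_, Q.pushforward_pullback f⟩
    rw [mem_coe, mem_boundedPartitions] at hQ ⊢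
    rw [← Q.pushforward_pullback f] at hQ
    simpa using hQ

theorem card_boundedPartitions_univ (σ n k : ℕ) :
    #(boundedPartitions σ n (univ : Finset (Fin k))) = E σ n k := by
  rw [E, ← Nat.card_eq_finsetCard]
  simp only [boundedPartitions, mem_filter, mem_univ, true_and]

theorem card_boundedPartitions (σ n : ℕ) (s : Finset α) :
    #(boundedPartitions σ n s) = E σ n #s := by
  have hs : (univ : Finset (Fin #s)).map (s.equivFin.symm.toEmbedding.trans (.subtype _)) = s := by
    rw [← map_map, map_univ_equiv, univ_eq_attach, attach_map_val]
  conv_lhs => rw [← hs, card_boundedPartitions_map]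
  exact card_boundedPartitions_univ σ n #s

theorem E_eq_zero_of_lt {σ n k : ℕ} (h : k < n) : E σ n k = 0 := by
  rw [← card_boundedPartitions_univ, card_eq_zero, eq_empty_iff_forall_notMem]
  intro P hP
  have hP' := P.card_parts_le_card
  rw [(mem_boundedPartitions.1 hP).1, card_univ, Fintype.card_fin] at hP'
  omega

theorem card_sigma_filter_card_eq (σ n : ℕ) {j : ℕ} (hj : j ≠ 0) (hjσ : j ≤ σ + 1)
    (s : Finset α) :
    #((boundedPartitions σ (n + 1) s).sigma fun P => {B ∈ P.parts | #B = j}) =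
      #((s.powersetCard j).sigma fun S => boundedPartitions σ n (s \ S)) := by
  refine card_bij' (fun x _ => ⟨x.2, x.1.avoid x.2⟩)
    (fun y _ => ⟨y.2.extendOfLE sdiff_le, y.1⟩) ?_ ?_ ?_ ?_
  · rintro ⟨P, B⟩ h
    simp only [mem_sigma, mem_boundedPartitions, mem_filter] at h
    obtain ⟨⟨hPn, hPσ⟩, hB, rfl⟩ := h
    simp only [mem_sigma, mem_powersetCard, mem_boundedPartitions, P.parts_avoid_of_mem hB,
      card_erase_of_mem hB, hPn]
    exact ⟨⟨P.subset hB, trivial⟩, rfl, fun p hp => hPσ p (mem_of_mem_erase hp)⟩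
  · rintro ⟨S, Q⟩ h
    simp only [mem_sigma, mem_powersetCard, mem_boundedPartitions] at h
    obtain ⟨⟨hSs, rfl⟩, hQn, hQσ⟩ := h
    have hS : S ≠ ⊥ := by rintro rfl; exact hj rfl
    simp only [mem_sigma, mem_boundedPartitions, mem_filter, Q.parts_extendOfLE_sdiff hSs hS,
      card_insert_of_notMem (Q.notMem_parts_of_sdiff hS), hQn, mem_insert, forall_eq_or_imp]
    exact ⟨⟨trivial, hjσ, hQσ⟩, Or.inl trivial, trivial⟩
  · rintro ⟨P, B⟩ h
    simp only [mem_sigma, mem_filter] at h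
    obtain ⟨-, hB, rfl⟩ := h
    have hB0 : B ≠ ⊥ := P.ne_bot hB
    refine Sigma.ext (Finpartition.ext ?_) HEq.rfl
    rw [Finpartition.parts_extendOfLE_sdiff _ (P.le hB) hB0, P.parts_avoid_of_mem hB,
      insert_erase hB]
  · rintro ⟨S, Q⟩ h
    simp only [mem_sigma, mem_powersetCard] at h
    obtain ⟨⟨hSs, rfl⟩, -⟩ := h
    have hS : S ≠ ⊥ := by rintro rfl; exact hj rfl
    refine Sigma.ext rfl (heq_of_eq (Finpartition.ext ?_))
    have hSQ : S ∈ (Q.extendOfLE sdiff_le).parts := by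
      rw [Q.parts_extendOfLE_sdiff hSs hS]
      exact mem_insert_self _ _
    rw [Finpartition.parts_avoid_of_mem _ hSQ, Q.parts_extendOfLE_sdiff hSs hS,
      erase_insert (Q.notMem_parts_of_sdiff hS)]

theorem sum_card_filter_card_eq (σ n : ℕ) {j : ℕ} (hj : j ≠ 0) (hjσ : j ≤ σ + 1)
    (s : Finset α) :
    ∑ P ∈ boundedPartitions σ (n + 1) s, #{B ∈ P.parts | #B = j} =
      (#s).choose j * E σ n (#s - j) := by
  have hS : ∀ S ∈ s.powersetCard j, #(boundedPartitions σ n (s \ S)) = E σ n (#s - j) := by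
    intro S hS
    obtain ⟨hSs, hSj⟩ := mem_powersetCard.1 hS
    rw [card_boundedPartitions, card_sdiff_of_subset hSs, hSj]
  rw [← card_sigma, card_sigma_filter_card_eq σ n hj hjσ, card_sigma, sum_congr rfl hS,
    sum_const, card_powersetCard, smul_eq_mul]

theorem sum_weight_mul_choose_mul_E (σ n : ℕ) (s : Finset α) (w : ℕ → ℕ) :
    ∑ j ∈ Icc 1 (σ + 1), w j * ((#s).choose j * E σ n (#s - j)) =
      ∑ P ∈ boundedPartitions σ (n + 1) s, ∑ B ∈ P.parts, w #B := by
  have hcard : ∀ P ∈ boundedPartitions σ (n + 1) s, ∀ B ∈ P.parts, #B ∈ Icc 1 (σ + 1) :=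
    fun P hP B hB => mem_Icc.2 ⟨card_pos.2 (P.nonempty_of_mem_parts hB),
      (mem_boundedPartitions.1 hP).2 B hB⟩
  calc ∑ j ∈ Icc 1 (σ + 1), w j * ((#s).choose j * E σ n (#s - j))
      = ∑ j ∈ Icc 1 (σ + 1), ∑ P ∈ boundedPartitions σ (n + 1) s,
          ∑ B ∈ P.parts with #B = j, w #B := by
        refine sum_congr rfl fun j hj => ?_
        obtain ⟨hj1, hjσ⟩ := mem_Icc.1 hj
        rw [← sum_card_filter_card_eq σ n (by omega) hjσ, mul_sum]
        refine sum_congr rfl fun P _ => ?_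
        rw [sum_congr rfl fun B hB => congrArg w (mem_filter.1 hB).2, sum_const, smul_eq_mul,
          mul_comm]
    _ = ∑ P ∈ boundedPartitions σ (n + 1) s, ∑ B ∈ P.parts, w #B := by
        rw [sum_comm]
        exact sum_congr rfl fun P hP => sum_fiberwise_of_maps_to (hcard P hP) _

theorem sum_choose_mul_E (σ n m : ℕ) :
    ∑ j ∈ Icc 1 (σ + 1), m.choose j * E σ n (m - j) = (n + 1) * E σ (n + 1) m := by
  have h := sum_weight_mul_choose_mul_E σ n (univ : Finset (Fin m)) 1
  simp only [Pi.one_apply, one_mul, sum_const, smul_eq_mul, mul_one, card_univ,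
    Fintype.card_fin] at h
  rw [h, sum_congr rfl fun P hP => (mem_boundedPartitions.1 hP).1, sum_const, smul_eq_mul,
    card_boundedPartitions_univ, mul_comm]

theorem sum_mul_choose_mul_E (σ n m : ℕ) :
    ∑ j ∈ Icc 1 (σ + 1), j * (m.choose j * E σ n (m - j)) = m * E σ (n + 1) m := by
  have h := sum_weight_mul_choose_mul_E σ n (univ : Finset (Fin m)) id
  simp only [id, card_univ, Fintype.card_fin] at h
  rw [h, sum_congr rfl fun P _ => P.sum_card_parts, card_univ, Fintype.card_fin, sum_const,
    smul_eq_mul, card_boundedPartitions_univ, mul_comm]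

end BoundedPartitions

theorem sum_choose_mul_E_eq_zero (σ n m : ℕ) :
    ∑ j ∈ Icc 1 (σ + 1), (((n : ℚ) + 1) * j - m) * (m.choose j * E σ n (m - j)) = 0 := by
  have h₁ : ∑ j ∈ Icc 1 (σ + 1), (m.choose j : ℚ) * E σ n (m - j) =
      (n + 1) * E σ (n + 1) m := by
    exact_mod_cast sum_choose_mul_E σ n m
  have h₂ : ∑ j ∈ Icc 1 (σ + 1), (j : ℚ) * (m.choose j * E σ n (m - j)) =
      m * E σ (n + 1) m := by
    exact_mod_cast sum_mul_choose_mul_E σ n m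
  simp only [sub_mul, mul_assoc, sum_sub_distrib, ← mul_sum, h₁, h₂]
  ring

theorem sub_mul_succ_mul_E_eq_sum (σ n k : ℕ) :
    ((k : ℚ) - n) * (k + 1) * E σ n k = ∑ i ∈ Icc 1 σ,
      (((n : ℚ) + 1) * i - k + n) * ((k + 1).choose (i + 1) * E σ n (k - i)) := by
  have h := sum_choose_mul_E_eq_zero σ n (k + 1)
  rw [← add_sum_Ioc_eq_sum_Icc (by omega), ← Icc_add_one_left_eq_Ioc, ← map_add_right_Icc,
    sum_map] at h
  simp only [addRightEmbedding_apply, Nat.choose_one_right, Nat.add_sub_add_right,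
    Nat.add_sub_cancel] at h
  push_cast at h ⊢
  simp only [show ∀ x : ℚ, ((n : ℚ) + 1) * (x + 1) - (k + 1) = (n + 1) * x - k + n from
    fun x => by ring] at h
  linear_combination -h

theorem stmt_3_general (σ n k : ℕ) (h1 : n < k) :
    (E σ n k : ℚ) = (k.factorial : ℚ) / (k - n : ℚ) *
      ∑ i ∈ Finset.Icc 1 (min σ (k - n)),
        (((n : ℚ) + 1) * i - k + n) / ((i + 1).factorial * (k - i).factorial) *
          E σ n (k - i) := by
  set f : ℕ → ℚ := fun i =>
    (((n : ℚ) + 1) * i - k + n) * ((k + 1).choose (i + 1) * E σ n (k - i))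
  have hterm : ∀ i ∈ Icc 1 (min σ (k - n)),
      (((n : ℚ) + 1) * i - k + n) / ((i + 1).factorial * (k - i).factorial) * E σ n (k - i) =
        f i / ((k + 1) * k.factorial) := by
    intro i hi
    simp only [mem_Icc, le_min_iff] at hi
    have hik : i + 1 ≤ k + 1 := by omega
    simp only [f]
    rw [Nat.cast_choose ℚ hik, Nat.add_sub_add_right, Nat.factorial_succ k]
    push_cast
    field_simp
  have hvanish : ∑ i ∈ Icc 1 (min σ (k - n)), f i = ∑ i ∈ Icc 1 σ, f i := by
    refine sum_subset (Icc_subset_Icc_right (min_le_left _ _)) fun i hi hi' => ?_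
    simp only [mem_Icc, le_min_iff] at hi hi'
    rcases le_or_gt i k with hik | hik
    · simp [f, E_eq_zero_of_lt (show k - i < n by omega)]
    · simp [f, Nat.choose_eq_zero_of_lt (show k + 1 < i + 1 by omega)]
  have hkn : (k - n : ℚ) ≠ 0 := sub_ne_zero.2 (by exact_mod_cast h1.ne')
  rw [sum_congr rfl hterm, ← sum_div, hvanish, ← sub_mul_succ_mul_E_eq_sum]
  field_simp

theorem stmt_3 (σ n k : ℕ) (hσ : 1 ≤ σ) (h1 : n < k) (h2 : k ≤ (σ + 1) * n) :
    (E σ n k : ℚ) = (k.factorial : ℚ) / (k - n : ℚ) *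
      ∑ i ∈ Finset.Icc 1 (min σ (k - n)),
        (((n : ℚ) + 1) * i - k + n) / ((i + 1).factorial * (k - i).factorial) *
          E σ n (k - i) :=
  stmt_3_general σ n k h1
end

section
/- For σ ≥ 0 and n ≥ 0, G_σ(n) = (1/n!) · Σ_{i₁=1}^{σ+1} Σ_{i₂=1}^{σ+1} ⋯ Σ_{i_n=1}^{σ+1} (i₁ + i₂ + ⋯ + i_n)! / (i₁! i₂! ⋯ i_n!). -/
/-!
Label the blocks of a partition counted by `E σ n k` by `Fin n`: the `n!` labellings of such a
partition are exactly the maps `Fin k → Fin n` whose fibres are nonempty of size at most `σ + 1`.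
Sorting these maps by their vector `i` of fibre sizes, the maps with a given `i` form one orbit of
`Perm (Fin k)` whose stabilizer is `∏ j, Perm (fibre j)`, so there are `(∑ i)! / ∏ (i j)!` of
them. Summing over `k` removes the constraint `∑ i = k`.
-/

open Finset Equiv Nat Function

section FiberCard

variable {α ι : Type*} [Fintype α] [DecidableEq ι]

def fiberCard (f : α → ι) (j : ι) : ℕ := #{a | f a = j}

lemma fiberCard_eq_card_subtype (f : α → ι) (j : ι) :
    fiberCard f j = Fintype.card {a // f a = j} :=
  (Fintype.card_subtype _).symm

lemma exists_perm_comp_eq {f g : α → ι} (h : fiberCard f = fiberCard g) :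
    ∃ π : Perm α, f ∘ π = g := by
  have e : ∀ j, {a // g a = j} ≃ {a // f a = j} := fun j =>
    Fintype.equivOfCardEq <| by rw [← fiberCard_eq_card_subtype, ← fiberCard_eq_card_subtype, h]
  refine ⟨(sigmaFiberEquiv g).symm.trans ((sigmaCongrRight e).trans (sigmaFiberEquiv f)), ?_⟩
  funext a
  exact (e (g a) ⟨a, rfl⟩).2

lemma exists_fiberCard_eq [Fintype ι] (i : ι → ℕ) (hi : ∑ j, i j = Fintype.card α) :
    ∃ f : α → ι, fiberCard f = i := by
  obtain ⟨e⟩ : Nonempty (α ≃ Σ j, Fin (i j)) := Fintype.card_eq.1 (by simp [hi])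
  refine ⟨fun a => (e a).1, funext fun j => ?_⟩
  rw [fiberCard_eq_card_subtype, Fintype.card_congr ((e.subtypeEquiv fun _ => Iff.rfl).trans
    (sigmaSubtype j)), Fintype.card_fin]

lemma sum_fiberCard [Fintype ι] (f : α → ι) : ∑ j, fiberCard f j = Fintype.card α :=
  (card_eq_sum_card_fiberwise fun a _ => mem_univ (f a)).symm

lemma fiberCard_comp_perm (f : α → ι) (π : Perm α) : fiberCard (f ∘ π) = fiberCard f := by
  funext j
  simp only [fiberCard_eq_card_subtype]
  exact Fintype.card_congr (π.subtypeEquiv fun _ => Iff.rfl)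

variable [DecidableEq α] [Fintype ι]

lemma card_fiberCard_eq_mul_prod_factorial (f : α → ι) :
    #{g : α → ι | fiberCard g = fiberCard f} * ∏ j, (fiberCard f j)! =
      (Fintype.card α)! := by
  have hstab : ∀ g ∈ ({g : α → ι | fiberCard g = fiberCard f} : Finset _),
      #{π : Perm α | f ∘ π = g} = ∏ j, (fiberCard f j)! := by
    intro g hg
    obtain ⟨π₀, rfl⟩ := exists_perm_comp_eq (mem_filter.1 hg).2.symm
    -- `π ↦ π * π₀⁻¹` maps the fibre over `f ∘ π₀` onto the stabilizer of `f`
    have hshift (π : Perm α) : f ∘ π = f ∘ π₀ ↔ f ∘ ⇑(π * π₀⁻¹) = f := by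
      rw [Perm.coe_mul, ← Function.comp_assoc, Perm.inv_def, Equiv.comp_symm_eq, eq_comm]
    rw [← Fintype.card_subtype, Fintype.card_congr ((Equiv.mulRight π₀⁻¹).subtypeEquiv
        (p := fun π : Perm α => f ∘ π = f ∘ π₀) (q := fun π : Perm α => f ∘ π = f)
        hshift),
      DomMulAct.stabilizer_card]
    simp only [fiberCard_eq_card_subtype]
  rw [← Fintype.card_perm, ← Finset.card_univ,
    card_eq_sum_card_fiberwise (s := univ) (f := fun π : Perm α => f ∘ π)
      (t := {g : α → ι | fiberCard g = fiberCard f})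
      (fun π _ => by simp [fiberCard_comp_perm]),
    sum_congr rfl hstab, sum_const, smul_eq_mul]

lemma card_fiberCard_eq_multinomial (i : ι → ℕ) (hi : ∑ j, i j = Fintype.card α) :
    #{g : α → ι | fiberCard g = i} = multinomial univ i := by
  obtain ⟨f, rfl⟩ := exists_fiberCard_eq i hi
  refine Nat.eq_of_mul_eq_mul_right
    (prod_pos (s := univ) fun j _ => factorial_pos (fiberCard f j)) ?_
  rw [card_fiberCard_eq_mul_prod_factorial, ← hi, ← multinomial_spec, mul_comm]

lemma card_fiberCard_mem_piFinset (s : ι → Finset ℕ) :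
    #{f : α → ι | ∀ j, fiberCard f j ∈ s j} =
      ∑ i ∈ Fintype.piFinset s with ∑ j, i j = Fintype.card α, multinomial univ i := by
  rw [card_eq_sum_card_fiberwise (f := fiberCard)
    (t := {i ∈ Fintype.piFinset s | ∑ j, i j = Fintype.card α})]
  · refine sum_congr rfl fun i hi => ?_
    rw [mem_filter, Fintype.mem_piFinset] at hi
    rw [← card_fiberCard_eq_multinomial i hi.2, filter_filter]
    exact congrArg card (filter_congr fun f _ => ⟨And.right, fun h => ⟨h ▸ hi.1, h⟩⟩)
  · intro f hf
    simpa [sum_fiberCard] using hf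

end FiberCard

namespace Finpartition

variable {α ι : Type*} [Fintype α] [DecidableEq α]

noncomputable def blockLabel (P : Finpartition (univ : Finset α)) (e : ι ≃ P.parts) (a : α) :
    ι :=
  e.symm ⟨P.part a, P.part_mem.2 (mem_univ a)⟩

lemma forall_mem_parts_iff (P : Finpartition (univ : Finset α)) (e : ι ≃ P.parts)
    (q : Finset α → Prop) : (∀ t ∈ P.parts, q t) ↔ ∀ j, q (e j) := by
  refine ⟨fun h j => h _ (e j).2, fun h t ht => ?_⟩
  simpa using h (e.symm ⟨t, ht⟩)

lemma parts_eq_image [Fintype ι] (P : Finpartition (univ : Finset α)) (e : ι ≃ P.parts) :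
    P.parts = univ.image fun j => (e j : Finset α) := by
  ext t
  simp only [mem_image, mem_univ, true_and]
  exact ⟨fun ht => ⟨e.symm ⟨t, ht⟩, by simp⟩, fun ⟨j, hj⟩ => hj ▸ (e j).2⟩

variable [DecidableEq ι]

lemma filter_blockLabel_eq (P : Finpartition (univ : Finset α)) (e : ι ≃ P.parts) (j : ι) :
    ({a | P.blockLabel e a = j} : Finset α) = e j := by
  ext a
  simp only [mem_filter, mem_univ, true_and, blockLabel, Equiv.symm_apply_eq, Subtype.ext_iff]
  exact P.part_eq_iff_mem (e j).2

lemma fiberCard_blockLabel (P : Finpartition (univ : Finset α)) (e : ι ≃ P.parts) (j : ι) :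
    fiberCard (P.blockLabel e) j = #(e j : Finset α) :=
  congrArg card (P.filter_blockLabel_eq e j)

lemma blockLabel_injective [Fintype ι] :
    Injective fun x : Σ P : Finpartition (univ : Finset α), ι ≃ P.parts =>
      x.1.blockLabel x.2 := by
  rintro ⟨P, e⟩ ⟨P', e'⟩ h
  have hblock : ∀ j, (e j : Finset α) = e' j := fun j => by
    rw [← filter_blockLabel_eq P e, ← filter_blockLabel_eq P' e']
    simp only at h
    rw [h]
  obtain rfl : P = P' := Finpartition.ext <| by
    rw [parts_eq_image P e, parts_eq_image P' e', funext hblock]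
  obtain rfl : e = e' := Equiv.ext fun j => Subtype.ext (hblock j)
  rfl

variable [Fintype ι]

def ofSurjective (f : α → ι) (hf : Surjective f) : Finpartition (univ : Finset α) :=
  ofExistsUnique (univ.image fun j => ({a | f a = j} : Finset α)) (fun _ _ => subset_univ _)
    (fun a _ => ⟨({b | f b = f a} : Finset α), by simp, by
      rintro t ⟨ht, hat⟩
      obtain ⟨j, -, rfl⟩ := mem_image.1 ht
      rw [(mem_filter.1 hat).2]⟩)
    (by
      simp only [mem_image, mem_univ, true_and, not_exists]
      intro j hj
      obtain ⟨a, rfl⟩ := hf j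
      exact ne_empty_of_mem (a := a) (by simp) hj)

lemma parts_ofSurjective (f : α → ι) (hf : Surjective f) :
    (ofSurjective f hf).parts = univ.image fun j => ({a | f a = j} : Finset α) :=
  rfl

lemma part_ofSurjective (f : α → ι) (hf : Surjective f) (a : α) :
    (ofSurjective f hf).part a = ({b | f b = f a} : Finset α) :=
  (ofSurjective f hf).part_eq_of_mem (by simp [parts_ofSurjective]) (by simp)

lemma exists_blockLabel_eq (f : α → ι) (hf : Surjective f) :
    ∃ e : ι ≃ (ofSurjective f hf).parts, (ofSurjective f hf).blockLabel e = f := by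
  let fiber (j : ι) : (ofSurjective f hf).parts :=
    ⟨({a | f a = j} : Finset α), by simp [parts_ofSurjective]⟩
  have hfiber : Bijective fiber := by
    refine ⟨fun j j' h => ?_, fun ⟨t, ht⟩ => ?_⟩
    · obtain ⟨a, rfl⟩ := hf j
      have ha : a ∈ (fiber (f a) : Finset α) := by simp [fiber]
      rw [h] at ha
      exact (mem_filter.1 ha).2
    · obtain ⟨j, -, rfl⟩ := mem_image.1 ((parts_ofSurjective f hf) ▸ ht)
      exact ⟨j, rfl⟩
  refine ⟨Equiv.ofBijective fiber hfiber, funext fun a => ?_⟩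
  rw [blockLabel, Equiv.symm_apply_eq, Equiv.ofBijective_apply, Subtype.ext_iff]
  exact part_ofSurjective f hf a

end Finpartition

theorem factorial_card_mul_card_finpartition {α ι : Type*} [Fintype α] [DecidableEq α]
    [Fintype ι] [DecidableEq ι] (p : ℕ → Prop) [DecidablePred p] :
    (Fintype.card ι)! * Nat.card {P : Finpartition (univ : Finset α) //
        #P.parts = Fintype.card ι ∧ ∀ t ∈ P.parts, p #t} =
      #{f : α → ι | ∀ j, 0 < fiberCard f j ∧ p (fiberCard f j)} := by
  classical
  let Φ : (Σ P : {P : Finpartition (univ : Finset α) //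
        #P.parts = Fintype.card ι ∧ ∀ t ∈ P.parts, p #t}, ι ≃ P.1.parts) →
      ({f : α → ι | ∀ j, 0 < fiberCard f j ∧ p (fiberCard f j)} : Finset _) :=
    fun x => ⟨x.1.1.blockLabel x.2, mem_filter.2 ⟨mem_univ _, fun j => by
      rw [Finpartition.fiberCard_blockLabel]
      exact ⟨card_pos.2 (x.1.1.nonempty_of_mem_parts (x.2 j).2), x.1.2.2 _ (x.2 j).2⟩⟩⟩
  have hΦ : Bijective Φ := by
    refine ⟨?_, fun ⟨f, hf⟩ => ?_⟩
    · rintro ⟨⟨P, hP⟩, e⟩ ⟨⟨P', hP'⟩, e'⟩ h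
      obtain ⟨rfl, he⟩ := Sigma.mk.inj_iff.1
        (Finpartition.blockLabel_injective (a₁ := ⟨P, e⟩) (a₂ := ⟨P', e'⟩)
          (congrArg Subtype.val h))
      obtain rfl := eq_of_heq he
      rfl
    · have hf := (mem_filter.1 hf).2
      have hsurj : Surjective f := fun j => by
        obtain ⟨a, ha⟩ := card_pos.1 (hf j).1
        exact ⟨a, (mem_filter.1 ha).2⟩
      obtain ⟨e, he⟩ := Finpartition.exists_blockLabel_eq f hsurj
      refine ⟨⟨⟨Finpartition.ofSurjective f hsurj, ?_, ?_⟩, e⟩, Subtype.ext he⟩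
      · rw [← Fintype.card_coe, Fintype.card_congr e.symm]
      · refine (Finpartition.forall_mem_parts_iff _ e _).2 fun j => ?_
        rw [← Finpartition.fiberCard_blockLabel, he]
        exact (hf j).2
  rw [← Nat.card_eq_finsetCard, ← Nat.card_eq_of_bijective Φ hΦ, Nat.card_sigma,
    sum_congr rfl fun P _ => Nat.card_eq_fintype_card.trans
      (Fintype.card_equiv (Fintype.equivOfCardEq (by simp [P.2.1]))),
    sum_const, smul_eq_mul, Finset.card_univ, Nat.card_eq_fintype_card, mul_comm]

lemma Nat.cast_multinomial {ι K : Type*} [Field K] [CharZero K] (s : Finset ι) (i : ι → ℕ) :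
    (multinomial s i : K) = (∑ j ∈ s, i j)! / ∏ j ∈ s, ((i j)! : K) := by
  rw [eq_div_iff (prod_ne_zero_iff.2 fun j _ => Nat.cast_ne_zero.2 (factorial_ne_zero _)),
    mul_comm]
  exact_mod_cast multinomial_spec s i

lemma sum_mem_Icc_of_mem_piFinset {ι : Type*} [Fintype ι] [DecidableEq ι] {a b : ℕ}
    {i : ι → ℕ} (hi : i ∈ Fintype.piFinset fun _ => Icc a b) :
    ∑ j, i j ∈ Icc (a * Fintype.card ι) (b * Fintype.card ι) := by
  rw [Fintype.mem_piFinset] at hi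
  refine mem_Icc.2 ⟨?_, ?_⟩
  · simpa [mul_comm] using card_nsmul_le_sum univ i a fun j _ => (mem_Icc.1 (hi j)).1
  · simpa [mul_comm] using sum_le_card_nsmul univ i b fun j _ => (mem_Icc.1 (hi j)).2

lemma factorial_mul_E_eq_sum_multinomial (σ n k : ℕ) :
    n ! * E σ n k = ∑ i ∈ Fintype.piFinset (fun _ : Fin n => Icc 1 (σ + 1))
      with ∑ j, i j = k, multinomial univ i := by
  have hlabel := factorial_card_mul_card_finpartition (α := Fin k) (ι := Fin n) (· ≤ σ + 1)
  have hcount := card_fiberCard_mem_piFinset (α := Fin k) fun _ : Fin n => Icc 1 (σ + 1)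
  rw [Fintype.card_fin] at hlabel hcount
  rw [E, hlabel, ← hcount]
  -- the two filters decide `∀ j : Fin n` by different instances, which `congr!` identifies
  congr! 4 with f j
  rw [mem_Icc, Nat.one_le_iff_ne_zero, Nat.pos_iff_ne_zero]

theorem stmt_4 (σ n : ℕ) :
    (G σ n : ℚ) = (1 / n.factorial : ℚ) *
      ∑ i ∈ Fintype.piFinset fun _ : Fin n => Finset.Icc 1 (σ + 1),
        ((∑ r, i r).factorial : ℚ) / ∏ r, ((i r).factorial : ℚ) := by
  have hcount : n ! * G σ n =
      ∑ i ∈ Fintype.piFinset fun _ : Fin n => Icc 1 (σ + 1), multinomial univ i := by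
    rw [G, mul_sum, sum_congr rfl fun k _ => factorial_mul_E_eq_sum_multinomial σ n k]
    exact sum_fiberwise_of_maps_to (fun i hi => by
      simpa using sum_mem_Icc_of_mem_piFinset hi) _
  have hq := congrArg (Nat.cast : ℕ → ℚ) hcount
  push_cast [Nat.cast_multinomial] at hq
  rw [one_div, ← hq, inv_mul_cancel_left₀ (by positivity)]
end

section
/- For σ ≥ 1 and n ≥ 0, G_σ(n) = (1/n!) ∫₀^∞ e^{-y} (Σ_{j=1}^{σ+1} y^j / j!)^n dy. -/
/-!
Expanding the power, the integrand is the sum over `f ∈ [1, σ+1]ⁿ` of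
`e^{-y} y^{Σ fᵢ} / ∏ fᵢ!`, and `∫₀^∞ e^{-y} y^m dy = m!` turns it into the multinomial coefficient
`(Σ fᵢ)! / ∏ fᵢ!`. That coefficient counts the ordered `n`-tuples of disjoint blocks of sizes `f`
covering a `Σ fᵢ`-element set. Since blocks of positive size are nonempty and distinct, forgetting
their order is exactly `n!`-to-one onto the set partitions counted by `E σ n (Σ fᵢ)`.
-/

open Finset Nat

section DisjointCovers

variable {α : Type*} [DecidableEq α] {n : ℕ} {t : Finset α} {p : Fin n → Finset α}

/-- Blocks may be empty. -/
def disjointCovers (n : ℕ) (t : Finset α) : Finset (Fin n → Finset α) :=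
  {p ∈ Fintype.piFinset fun _ => t.powerset |
    (∀ i j, i ≠ j → Disjoint (p i) (p j)) ∧ univ.sup p = t}

theorem mem_disjointCovers :
    p ∈ disjointCovers n t ↔ (∀ i j, i ≠ j → Disjoint (p i) (p j)) ∧ univ.sup p = t := by
  rw [disjointCovers, mem_filter, Fintype.mem_piFinset, and_iff_right_iff_imp]
  rintro ⟨-, rfl⟩ i
  exact mem_powerset.2 (le_sup (mem_univ i))

theorem disjoint_and_union_eq_iff {b s : Finset α} :
    Disjoint b s ∧ b ∪ s = t ↔ b ⊆ t ∧ s = t \ b := by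
  constructor
  · rintro ⟨hd, rfl⟩
    exact ⟨subset_union_left, (union_sdiff_cancel_left hd).symm⟩
  · rintro ⟨hb, rfl⟩
    exact ⟨disjoint_sdiff, union_sdiff_of_subset hb⟩

theorem cons_mem_disjointCovers {b : Finset α} {q : Fin n → Finset α} :
    Fin.cons b q ∈ disjointCovers (n + 1) t ↔ b ⊆ t ∧ q ∈ disjointCovers n (t \ b) := by
  have hsup : univ.sup (Fin.cons b q : Fin (n + 1) → Finset α) = b ∪ univ.sup q := by
    rw [Fin.univ_succ, sup_cons, sup_map]; rfl
  have hdisj : (∀ i j, i ≠ j → Disjoint ((Fin.cons b q : Fin (n + 1) → Finset α) i)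
      ((Fin.cons b q : Fin (n + 1) → Finset α) j)) ↔
        Disjoint b (univ.sup q) ∧ ∀ i j, i ≠ j → Disjoint (q i) (q j) := by
    simp [Fin.forall_fin_succ, (Fin.succ_ne_zero _).symm, disjoint_comm (a := q _) (b := b),
      forall_and, Finset.disjoint_sup_right]
  have hcover := disjoint_and_union_eq_iff (t := t) (b := b) (s := univ.sup q)
  rw [mem_disjointCovers, mem_disjointCovers, hsup, hdisj]
  tauto

theorem sum_card_of_mem_disjointCovers (hp : p ∈ disjointCovers n t) : ∑ i, #(p i) = #t := by
  obtain ⟨hdisj, rfl⟩ := mem_disjointCovers.1 hp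
  rw [sup_eq_biUnion, card_biUnion fun i _ j _ hij => hdisj i j hij]

theorem injective_of_mem_disjointCovers (hp : p ∈ disjointCovers n t) (hne : ∀ i, p i ≠ ∅) :
    Function.Injective p := by
  intro i j hij
  by_contra hij'
  have hdisj := (mem_disjointCovers.1 hp).1 i j hij'
  rw [hij, disjoint_self] at hdisj
  exact hne j hdisj

theorem card_filter_disjointCovers_succ (f : Fin (n + 1) → ℕ) :
    #{p ∈ disjointCovers (n + 1) t | ∀ i, #(p i) = f i} =
      ∑ b ∈ t.powersetCard (f 0),
        #{q ∈ disjointCovers n (t \ b) | ∀ i, #(q i) = f (Fin.succ i)} := by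
  rw [card_eq_sum_card_fiberwise (f := fun p => p 0)]
  · refine sum_congr rfl fun b hb => ?_
    obtain ⟨hbt, hbf⟩ := mem_powersetCard.1 hb
    rw [filter_filter]
    refine card_nbij' Fin.tail
      (fun q : Fin n → Finset α => (Fin.cons b q : Fin (n + 1) → Finset α)) ?_ ?_ ?_ ?_
    · rintro p hp
      simp only [mem_coe, mem_filter] at hp ⊢
      obtain ⟨hpt, hpf, rfl⟩ := hp
      rw [← Fin.cons_self_tail p, cons_mem_disjointCovers] at hpt
      exact ⟨hpt.2, fun i => hpf i.succ⟩
    · rintro q hq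
      simp only [mem_coe, mem_filter] at hq ⊢
      exact ⟨cons_mem_disjointCovers.2 ⟨hbt, hq.1⟩, Fin.cases (by simpa using hbf) hq.2, rfl⟩
    · rintro p hp
      simp only [mem_coe, mem_filter] at hp
      rw [← hp.2.2]
      exact Fin.cons_self_tail p
    · rintro q -
      exact Fin.tail_cons _ _
  · intro p hp
    rw [mem_coe, mem_filter, mem_disjointCovers] at hp
    exact mem_powersetCard.2 ⟨hp.1.2 ▸ le_sup (mem_univ 0), hp.2 0⟩

theorem card_filter_disjointCovers_mul_prod_factorial (f : Fin n → ℕ) (hf : ∑ i, f i = #t) :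
    #{p ∈ disjointCovers n t | ∀ i, #(p i) = f i} * ∏ i, (f i)! = (#t)! := by
  induction n generalizing t with
  | zero =>
    obtain rfl : t = ∅ := Finset.card_eq_zero.1 (by simpa using hf.symm)
    simp [disjointCovers]
  | succ n ih =>
    rw [Fin.sum_univ_succ] at hf
    have hrest : ∀ b ∈ t.powersetCard (f 0),
        #{q ∈ disjointCovers n (t \ b) | ∀ i, #(q i) = f (Fin.succ i)} * ∏ i, (f (Fin.succ i))! =
          (#t - f 0)! := by
      intro b hb
      obtain ⟨hbt, hb⟩ := mem_powersetCard.1 hb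
      rw [ih _ (by rw [card_sdiff_of_subset hbt]; omega), card_sdiff_of_subset hbt, hb]
    calc #{p ∈ disjointCovers (n + 1) t | ∀ i, #(p i) = f i} * ∏ i, (f i)!
        = ∑ b ∈ t.powersetCard (f 0), (f 0)! *
            (#{q ∈ disjointCovers n (t \ b) | ∀ i, #(q i) = f (Fin.succ i)} *
              ∏ i, (f (Fin.succ i))!) := by
          rw [card_filter_disjointCovers_succ, Fin.prod_univ_succ, sum_mul]
          exact sum_congr rfl fun _ _ => by ring
      _ = (#t).choose (f 0) * (f 0)! * (#t - f 0)! := by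
          rw [sum_congr rfl fun b hb => by rw [hrest b hb], sum_const, card_powersetCard,
            smul_eq_mul, mul_assoc]
      _ = (#t)! := choose_mul_factorial_mul_factorial (by omega)

theorem card_filter_disjointCovers_eq_multinomial (f : Fin n → ℕ) (hf : ∑ i, f i = #t) :
    #{p ∈ disjointCovers n t | ∀ i, #(p i) = f i} = Nat.multinomial univ f := by
  refine Nat.eq_of_mul_eq_mul_right (prod_pos (s := univ) fun i _ => factorial_pos (f i)) ?_
  rw [card_filter_disjointCovers_mul_prod_factorial f hf, mul_comm, Nat.multinomial_spec, hf]

theorem card_filter_disjointCovers_card_mem (S : Finset ℕ) :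
    #{p ∈ disjointCovers n t | ∀ i, #(p i) ∈ S} =
      ∑ f ∈ Fintype.piFinset (fun _ : Fin n => S) with ∑ i, f i = #t, Nat.multinomial univ f := by
  rw [card_eq_sum_card_fiberwise (f := fun p i => #(p i))]
  · refine sum_congr rfl fun f hf => ?_
    rw [mem_filter, Fintype.mem_piFinset] at hf
    rw [← card_filter_disjointCovers_eq_multinomial f hf.2, filter_filter]
    refine congrArg card (filter_congr fun p _ => ?_)
    rw [funext_iff]
    exact ⟨And.right, fun h => ⟨fun i => h i ▸ hf.1 i, h⟩⟩
  · intro p hp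
    rw [mem_coe, mem_filter] at hp
    rw [mem_coe, mem_filter, Fintype.mem_piFinset]
    exact ⟨hp.2, sum_card_of_mem_disjointCovers hp.1⟩

def Finpartition.ofMemDisjointCovers (hp : p ∈ disjointCovers n t) (hne : ∀ i, p i ≠ ∅) :
    Finpartition t where
  parts := image p univ
  supIndep := by
    rw [supIndep_iff_pairwiseDisjoint]
    rintro _ hi _ hj hij
    obtain ⟨i, -, rfl⟩ := mem_image.1 (mem_coe.1 hi)
    obtain ⟨j, -, rfl⟩ := mem_image.1 (mem_coe.1 hj)
    exact (mem_disjointCovers.1 hp).1 i j (ne_of_apply_ne p hij)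
  sup_parts := by rw [sup_image, Function.id_comp, (mem_disjointCovers.1 hp).2]
  bot_notMem := by simpa [eq_comm] using hne

theorem Finpartition.parts_eq_image_univ {P : Finpartition t} (e : Fin n ≃ P.parts) :
    P.parts = image (fun i => (e i : Finset α)) univ := by
  ext b
  refine ⟨fun hb => mem_image.2 ⟨e.symm ⟨b, hb⟩, mem_univ _, by simp⟩, fun hb => ?_⟩
  obtain ⟨i, -, rfl⟩ := mem_image.1 hb
  exact (e i).2

theorem Finpartition.coe_comp_equiv_mem_disjointCovers {P : Finpartition t}
    (e : Fin n ≃ P.parts) : (fun i => (e i : Finset α)) ∈ disjointCovers n t := by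
  refine mem_disjointCovers.2 ⟨fun i j hij => ?_, ?_⟩
  · exact P.disjoint (e i).2 (e j).2 fun h => hij (e.injective (Subtype.ext h))
  · rw [← Function.id_comp (fun i => (e i : Finset α)), ← sup_image, ← P.parts_eq_image_univ e,
      P.sup_parts]

theorem card_filter_disjointCovers_eq_factorial_mul (Q : Finset α → Prop) [DecidablePred Q] :
    #{p ∈ disjointCovers n t | ∀ i, p i ≠ ∅ ∧ Q (p i)} =
      n ! * Nat.card {P : Finpartition t // #P.parts = n ∧ ∀ b ∈ P.parts, Q b} := by
  rw [Nat.card_eq_fintype_card, Fintype.card_subtype]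
  set PS := ({P : Finpartition t | #P.parts = n ∧ ∀ b ∈ P.parts, Q b} : Finset _)
  have hequivs : ∀ P ∈ PS, #(univ : Finset (Fin n ≃ P.parts)) = n ! := by
    intro P hP
    rw [Finset.card_univ, Fintype.card_equiv (Fintype.equivFinOfCardEq _).symm, Fintype.card_fin]
    simpa using (mem_filter.1 hP).2.1
  rw [mul_comm, ← sum_const_nat hequivs, ← card_sigma]
  symm
  refine card_bij (fun x _ i => (x.2 i : Finset α)) ?_ ?_ ?_
  · rintro ⟨P, e⟩ hx
    obtain ⟨-, hPQ⟩ := (mem_filter.1 (mem_sigma.1 hx).1).2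
    exact mem_filter.2 ⟨P.coe_comp_equiv_mem_disjointCovers e,
      fun i => ⟨P.ne_empty (e i).2, hPQ _ (e i).2⟩⟩
  · rintro ⟨P, e⟩ - ⟨P', e'⟩ - h
    obtain rfl : P = P' := Finpartition.ext <| by
      rw [P.parts_eq_image_univ e, P'.parts_eq_image_univ e']
      exact congrArg (image · univ) h
    exact Sigma.ext rfl (heq_of_eq (Equiv.ext fun i => Subtype.ext (congrFun h i)))
  · intro p hp
    obtain ⟨hcover, hpQ⟩ := mem_filter.1 hp
    have hinj := injective_of_mem_disjointCovers hcover fun i => (hpQ i).1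
    let P := Finpartition.ofMemDisjointCovers hcover fun i => (hpQ i).1
    let e : Fin n ≃ P.parts := Equiv.ofBijective (fun i => ⟨p i, mem_image_of_mem p (mem_univ i)⟩)
      ⟨fun i j h => hinj (congrArg Subtype.val h), fun ⟨b, hb⟩ => by
        obtain ⟨i, -, rfl⟩ := mem_image.1 hb
        exact ⟨i, rfl⟩⟩
    refine ⟨⟨P, e⟩, mem_sigma.2 ⟨mem_filter.2 ⟨mem_univ P, ?_, ?_⟩, mem_univ e⟩, rfl⟩
    · exact (card_image_of_injective univ hinj).trans (card_fin n)
    · rintro b hb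
      obtain ⟨i, -, rfl⟩ := mem_image.1 hb
      exact (hpQ i).2

end DisjointCovers

theorem factorial_mul_E (σ n k : ℕ) :
    n ! * E σ n k =
      #{p ∈ disjointCovers n (univ : Finset (Fin k)) | ∀ i, #(p i) ∈ Icc 1 (σ + 1)} := by
  have hsize : ∀ b : Finset (Fin k), #b ∈ Icc 1 (σ + 1) ↔ b ≠ ∅ ∧ #b ≤ σ + 1 := by
    simp [one_le_card, nonempty_iff_ne_empty]
  rw [E, ← card_filter_disjointCovers_eq_factorial_mul (fun b => #b ≤ σ + 1)]
  exact congrArg card (filter_congr fun p _ => forall_congr' fun i => (hsize (p i)).symm)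

theorem factorial_mul_G (σ n : ℕ) :
    n ! * G σ n =
      ∑ f ∈ Fintype.piFinset (fun _ : Fin n => Icc 1 (σ + 1)), Nat.multinomial univ f := by
  rw [G, mul_sum]
  simp only [factorial_mul_E, card_filter_disjointCovers_card_mem, Finset.card_fin]
  refine sum_fiberwise_of_maps_to (fun f hf => ?_) _
  have hbounds := Fintype.mem_piFinset.1 hf
  rw [mem_Icc]
  constructor
  · simpa using card_nsmul_le_sum univ f 1 fun i _ => (mem_Icc.1 (hbounds i)).1
  · simpa [mul_comm] using sum_le_card_nsmul univ f (σ + 1) fun i _ => (mem_Icc.1 (hbounds i)).2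

section Integral

open MeasureTheory

theorem integrableOn_exp_neg_mul_pow (m : ℕ) :
    IntegrableOn (fun y : ℝ => Real.exp (-y) * y ^ m) (Set.Ioi 0) := by
  refine (Real.GammaIntegral_convergent (s := m + 1) (by positivity)).congr_fun
    (fun y _ => ?_) measurableSet_Ioi
  simp [Real.rpow_natCast]

theorem integral_exp_neg_mul_pow (m : ℕ) :
    ∫ y in Set.Ioi (0 : ℝ), Real.exp (-y) * y ^ m = m ! := by
  rw [← Real.Gamma_nat_eq_factorial, Real.Gamma_eq_integral (by positivity)]
  refine setIntegral_congr_fun measurableSet_Ioi fun y _ => ?_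
  simp [Real.rpow_natCast]

theorem integral_exp_neg_mul_sum_pow (S : Finset ℕ) (n : ℕ) :
    ∫ y in Set.Ioi (0 : ℝ), Real.exp (-y) * (∑ j ∈ S, y ^ j / j !) ^ n =
      ∑ f ∈ Fintype.piFinset (fun _ : Fin n => S), (Nat.multinomial univ f : ℝ) := by
  have hexpand : ∀ y : ℝ, Real.exp (-y) * (∑ j ∈ S, y ^ j / j !) ^ n =
      ∑ f ∈ Fintype.piFinset (fun _ : Fin n => S),
        (∏ i, ((f i)! : ℝ))⁻¹ * (Real.exp (-y) * y ^ ∑ i, f i) := by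
    intro y
    rw [sum_pow', mul_sum]
    refine sum_congr rfl fun f _ => ?_
    rw [prod_div_distrib, prod_pow_eq_pow_sum]
    ring
  simp only [hexpand]
  rw [integral_finsetSum _ fun f _ => (integrableOn_exp_neg_mul_pow _).const_mul _]
  refine sum_congr rfl fun f _ => ?_
  rw [integral_const_mul, integral_exp_neg_mul_pow, inv_mul_eq_div, div_eq_iff (by positivity),
    mul_comm]
  exact_mod_cast (Nat.multinomial_spec univ f).symm

end Integral

open MeasureTheory in
theorem stmt_5_general (σ n : ℕ) :
    (G σ n : ℝ) = (1 / n.factorial : ℝ) *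
      ∫ y in Set.Ioi (0 : ℝ),
        Real.exp (-y) * (∑ j ∈ Finset.Icc 1 (σ + 1), y ^ j / j.factorial) ^ n := by
  rw [integral_exp_neg_mul_sum_pow, ← Nat.cast_sum, ← factorial_mul_G, Nat.cast_mul]
  field_simp

open MeasureTheory in
theorem stmt_5 (σ n : ℕ) (hσ : 1 ≤ σ) :
    (G σ n : ℝ) = (1 / n.factorial : ℝ) *
      ∫ y in Set.Ioi (0 : ℝ),
        Real.exp (-y) * (∑ j ∈ Finset.Icc 1 (σ + 1), y ^ j / j.factorial) ^ n :=
  stmt_5_general σ n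
end

section
/- For n ≥ 0, G_1(n) = Σ_{i=0}^{n} (n+i)! / ((n-i)! · i! · 2^i). -/
/-! A partition of an `(n + i)`-set into `n` blocks of size at most two has exactly `i` blocks
of size two, and it is determined by them, so `E 1 n (n + i)` counts the sets of `i` pairwise
disjoint pairs (matchings) in an `(n + i)`-set. Such a matching either avoids a given point `a` or
pairs it with one of the other points; this recursion shows that an `m`-set has
`m (m - 1) ⋯ (m - 2i + 1) / (i! 2^i)` matchings of size `i`, which for `m = n + i` is the `i`-th
summand. -/

open Finset
open scoped Nat

theorem Nat.succ_descFactorial_succ_eq_add (m k : ℕ) :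
    (m + 1).descFactorial (k + 1) = m.descFactorial (k + 1) + (k + 1) * m.descFactorial k := by
  rw [Nat.succ_descFactorial_succ, Nat.descFactorial_succ]
  rcases le_or_gt k m with hkm | hmk
  · rw [← add_mul]; congr 1; omega
  · simp [Nat.descFactorial_eq_zero_iff_lt.2 hmk]

theorem Nat.mul_pred_descFactorial (m k : ℕ) :
    m * (m - 1).descFactorial k = m.descFactorial (k + 1) := by
  cases m with
  | zero => simp
  | succ m => rw [Nat.succ_descFactorial_succ, Nat.add_sub_cancel]

variable {α : Type*} {s t : Finset α} {S : Finset (Finset α)} {a b : α} {i : ℕ}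

open scoped Classical in
noncomputable def matchings (s : Finset α) (i : ℕ) : Finset (Finset (Finset α)) :=
  {S ∈ (s.powersetCard 2).powersetCard i | (S : Set (Finset α)).PairwiseDisjoint id}

theorem mem_matchings : S ∈ matchings s i ↔
    S ⊆ s.powersetCard 2 ∧ #S = i ∧ (S : Set (Finset α)).PairwiseDisjoint id := by
  simp [matchings, mem_powersetCard, and_assoc]

theorem matchings_zero (s : Finset α) : matchings s 0 = {∅} := by
  ext S
  simp only [mem_matchings, Finset.card_eq_zero, mem_singleton]
  exact ⟨fun h ↦ h.2.1, by rintro rfl; simp⟩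

theorem matchings_empty_succ (i : ℕ) : matchings (∅ : Finset α) (i + 1) = ∅ := by
  refine eq_empty_of_forall_notMem fun S hS ↦ ?_
  obtain ⟨hsub, hcard, -⟩ := mem_matchings.1 hS
  rw [powersetCard_eq_empty.2 (by simp), subset_empty] at hsub
  simp [hsub] at hcard

theorem matchings_mono (h : s ⊆ t) : matchings s i ⊆ matchings t i := fun _ hS ↦ by
  rw [mem_matchings] at hS ⊢
  exact ⟨hS.1.trans (powersetCard_mono h), hS.2⟩

theorem notMem_of_mem_matchings {p : Finset α} (hS : S ∈ matchings s i) (hp : p ∈ S)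
    (ha : a ∉ s) : a ∉ p :=
  fun hap ↦ ha ((mem_powersetCard.1 ((mem_matchings.1 hS).1 hp)).1 hap)

variable [DecidableEq α]

theorem insert_pair_mem_matchings (ha : a ∉ s) (hb : b ∈ s)
    (hS : S ∈ matchings (s.erase b) i) :
    insert {a, b} S ∈ matchings (insert a s) (i + 1) := by
  obtain ⟨hsub, hcard, hdisj⟩ := mem_matchings.1 hS
  have hab : a ≠ b := by rintro rfl; exact ha hb
  have hpair : ∀ p ∈ S, Disjoint {a, b} p := fun p hp ↦ by
    have hps := (mem_powersetCard.1 (hsub hp)).1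
    simp only [disjoint_insert_left, disjoint_singleton_left]
    exact ⟨fun hap ↦ ha (mem_of_mem_erase (hps hap)), fun hbp ↦ notMem_erase b s (hps hbp)⟩
  have hnot : ({a, b} : Finset α) ∉ S := fun h ↦ by
    simpa using hpair _ h
  rw [mem_matchings, coe_insert]
  refine ⟨insert_subset ?_ (hsub.trans (powersetCard_mono ((erase_subset b s).trans
    (subset_insert a s)))), by rw [card_insert_of_notMem hnot, hcard],
    hdisj.insert fun p hp _ ↦ hpair p hp⟩
  exact mem_powersetCard.2 ⟨insert_subset_insert a (singleton_subset_iff.2 hb), card_pair hab⟩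

theorem erase_pair_mem_matchings (hS : S ∈ matchings (insert a s) (i + 1))
    (hab : {a, b} ∈ S) : S.erase {a, b} ∈ matchings (s.erase b) i := by
  obtain ⟨hsub, hcard, hdisj⟩ := mem_matchings.1 hS
  refine mem_matchings.2 ⟨fun p hp ↦ ?_, by rw [card_erase_of_mem hab, hcard]; rfl,
    hdisj.subset (by simp)⟩
  obtain ⟨hpne, hpS⟩ := mem_erase.1 hp
  obtain ⟨hps, hp2⟩ := mem_powersetCard.1 (hsub hpS)
  have hd : Disjoint p {a, b} := hdisj hpS hab hpne
  simp only [disjoint_insert_right, disjoint_singleton_right] at hd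
  exact mem_powersetCard.2
    ⟨subset_erase.2 ⟨(subset_insert_iff_of_notMem hd.1).1 hps, hd.2⟩, hp2⟩

theorem exists_eq_pair_of_mem (ha : a ∉ s) {p : Finset α}
    (hp : p ∈ (insert a s).powersetCard 2) (hap : a ∈ p) : ∃ b ∈ s, p = {a, b} := by
  obtain ⟨hps, hp2⟩ := mem_powersetCard.1 hp
  obtain ⟨b, hb⟩ := card_eq_one.1 (show #(p.erase a) = 1 by rw [card_erase_of_mem hap, hp2])
  refine ⟨b, ?_, by rw [← insert_erase hap, hb]⟩
  have : b ∈ (insert a s).erase a := erase_subset_erase a hps (hb ▸ mem_singleton_self b)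
  rwa [erase_insert ha] at this

theorem matchings_insert_succ (ha : a ∉ s) (i : ℕ) :
    matchings (insert a s) (i + 1) =
      matchings s (i + 1) ∪
        s.biUnion fun b ↦ (matchings (s.erase b) i).image (insert {a, b}) := by
  ext S
  simp only [mem_union, mem_biUnion, mem_image]
  constructor
  · intro hS
    by_cases hcov : ∃ p ∈ S, a ∈ p
    · obtain ⟨p, hp, hap⟩ := hcov
      obtain ⟨b, hb, rfl⟩ := exists_eq_pair_of_mem ha ((mem_matchings.1 hS).1 hp) hap
      exact Or.inr ⟨b, hb, S.erase {a, b}, erase_pair_mem_matchings hS hp, insert_erase hp⟩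
    · simp only [not_exists, not_and] at hcov
      obtain ⟨hsub, hrest⟩ := mem_matchings.1 hS
      refine Or.inl (mem_matchings.2 ⟨fun p hp ↦ ?_, hrest⟩)
      obtain ⟨hps, hp2⟩ := mem_powersetCard.1 (hsub hp)
      exact mem_powersetCard.2 ⟨(subset_insert_iff_of_notMem (hcov p hp)).1 hps, hp2⟩
  · rintro (hS | ⟨b, hb, S, hS, rfl⟩)
    · exact matchings_mono (subset_insert a s) hS
    · exact insert_pair_mem_matchings ha hb hS

theorem card_matchings_insert_succ (ha : a ∉ s) (i : ℕ) :
    #(matchings (insert a s) (i + 1)) =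
      #(matchings s (i + 1)) + ∑ b ∈ s, #(matchings (s.erase b) i) := by
  have hpair_notMem : ∀ b, ∀ T ∈ matchings (s.erase b) i, ∀ c, ({a, c} : Finset α) ∉ T :=
    fun b T hT c h ↦ notMem_of_mem_matchings hT h (fun h' ↦ ha (mem_of_mem_erase h'))
      (mem_insert_self a {c})
  rw [matchings_insert_succ ha, card_union_of_disjoint, card_biUnion]
  · refine congrArg _ (sum_congr rfl fun b _ ↦ card_image_of_injOn fun T hT U hU hTU ↦ ?_)
    rw [← erase_insert (hpair_notMem b T hT b), ← erase_insert (hpair_notMem b U hU b)]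
    exact congrArg (erase · _) hTU
  · intro b hb c _ hbc
    refine disjoint_left.2 fun T hTb hTc ↦ ?_
    obtain ⟨U, -, rfl⟩ := mem_image.1 hTb
    obtain ⟨V, hV, hVU⟩ := mem_image.1 hTc
    have : ({a, b} : Finset α) ∈ insert {a, c} V := hVU ▸ mem_insert_self _ _
    rcases mem_insert.1 this with h | h
    · have hbac : b ∈ ({a, c} : Finset α) := h ▸ mem_insert_of_mem (mem_singleton_self b)
      rcases mem_insert.1 hbac with rfl | hbc'
      · exact ha hb
      · exact hbc (mem_singleton.1 hbc')
    · exact hpair_notMem c V hV b h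
  · refine disjoint_left.2 fun T hT hT' ↦ ?_
    obtain ⟨b, -, hTb⟩ := mem_biUnion.1 hT'
    obtain ⟨U, -, rfl⟩ := mem_image.1 hTb
    exact notMem_of_mem_matchings hT (mem_insert_self _ _) ha (mem_insert_self a {b})

theorem card_biUnion_of_mem_matchings (hS : S ∈ matchings s i) : #(S.biUnion id) = 2 * i := by
  obtain ⟨hsub, hcard, hdisj⟩ := mem_matchings.1 hS
  rw [card_biUnion hdisj, sum_congr rfl fun p (hp : p ∈ S) ↦
    show #(id p) = 2 from (mem_powersetCard.1 (hsub hp)).2, sum_const, smul_eq_mul, hcard, mul_comm]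

theorem biUnion_subset_of_mem_matchings (hS : S ∈ matchings s i) : S.biUnion id ⊆ s :=
  biUnion_subset.2 fun _ hp ↦ (mem_powersetCard.1 ((mem_matchings.1 hS).1 hp)).1

theorem two_mul_le_card_of_mem_matchings (hS : S ∈ matchings s i) : 2 * i ≤ #s :=
  card_biUnion_of_mem_matchings hS ▸ card_le_card (biUnion_subset_of_mem_matchings hS)

/- Stated with `descFactorial` so that it holds for every `i`: both sides vanish when `2 * i > #s`,
which keeps the recursion free of case distinctions. -/
theorem card_matchings_mul (s : Finset α) (i : ℕ) :
    #(matchings s i) * (i ! * 2 ^ i) = (#s).descFactorial (2 * i) := by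
  induction s using Finset.strongInduction generalizing i with
  | H s ih =>
    rcases i with _ | i
    · simp [matchings_zero]
    rcases s.eq_empty_or_nonempty with rfl | ⟨a, ha⟩
    · rw [matchings_empty_succ, card_empty, zero_mul, card_empty, mul_add_one,
        Nat.zero_descFactorial_succ]
    set t := s.erase a
    have hst : s = insert a t := (insert_erase ha).symm
    have hat : a ∉ t := notMem_erase a s
    have ht : t ⊂ s := erase_ssubset ha
    have hterm : ∀ b ∈ t,
        #(matchings (t.erase b) i) * (i ! * 2 ^ i) = (#t - 1).descFactorial (2 * i) :=
      fun b hb ↦ by rw [ih _ ((erase_subset b t).trans_ssubset ht), card_erase_of_mem hb]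
    rw [hst, card_matchings_insert_succ hat, card_insert_of_notMem hat, add_mul, sum_mul,
      ih t ht, show 2 * (i + 1) = 2 * i + 1 + 1 by ring, Nat.succ_descFactorial_succ_eq_add]
    congr 1
    calc ∑ b ∈ t, #(matchings (t.erase b) i) * ((i + 1)! * 2 ^ (i + 1))
        = ∑ b ∈ t, (#t - 1).descFactorial (2 * i) * (2 * i + 2) := sum_congr rfl fun b hb ↦ by
          rw [← hterm b hb, Nat.factorial_succ, pow_succ]; ring
      _ = (2 * i + 1 + 1) * (#t).descFactorial (2 * i + 1) := by
          rw [sum_const, smul_eq_mul, ← Nat.mul_pred_descFactorial]; ring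

namespace Finpartition

theorem card_parts_add_card_filter_card_eq_two (P : Finpartition s)
    (hP : ∀ p ∈ P.parts, #p ≤ 2) : #P.parts + #{p ∈ P.parts | #p = 2} = #s := by
  have hsingle : ∀ p ∈ P.parts, #p ≠ 2 → #p = 1 := fun p hp hp2 ↦ by
    have := (P.nonempty_of_mem_parts hp).card_pos
    have := hP p hp
    omega
  rw [← P.sum_card_parts, ← sum_filter_add_sum_filter_not P.parts (#· = 2),
    ← card_filter_add_card_filter_not (#· = 2), sum_congr rfl fun p hp ↦ (mem_filter.1 hp).2,
    sum_congr rfl fun p hp ↦ hsingle p (mem_filter.1 hp).1 (mem_filter.1 hp).2]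
  simp only [sum_const, smul_eq_mul]
  ring

@[simps]
def ofMatching (hS : S ∈ matchings s i) : Finpartition s where
  parts := S ∪ (s \ S.biUnion id).image singleton
  supIndep := by
    obtain ⟨-, -, hdisj⟩ := mem_matchings.1 hS
    rw [supIndep_iff_pairwiseDisjoint]
    rintro p hp q hq hpq
    simp only [coe_union, coe_image, Set.mem_union, mem_coe, Set.mem_image, mem_sdiff,
      mem_biUnion, id, not_exists, not_and] at hp hq
    rcases hp with hp | ⟨x, ⟨-, hx⟩, rfl⟩ <;> rcases hq with hq | ⟨y, ⟨-, hy⟩, rfl⟩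
    · exact hdisj hp hq hpq
    · exact disjoint_singleton_right.2 (hy p hp)
    · exact disjoint_singleton_left.2 (hx q hq)
    · exact disjoint_singleton.2 fun h ↦ hpq (congrArg _ h)
  sup_parts := by
    obtain ⟨hsub, -, -⟩ := mem_matchings.1 hS
    refine le_antisymm (Finset.sup_le fun p hp ↦ ?_) fun x hx ↦ ?_
    · rcases mem_union.1 hp with hp | hp
      · exact (mem_powersetCard.1 (hsub hp)).1
      · obtain ⟨x, hx, rfl⟩ := mem_image.1 hp
        exact singleton_subset_iff.2 (mem_sdiff.1 hx).1
    · by_cases hcov : x ∈ S.biUnion id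
      · obtain ⟨p, hp, hxp⟩ := mem_biUnion.1 hcov
        exact mem_sup.2 ⟨p, mem_union_left _ hp, hxp⟩
      · refine mem_sup.2 ⟨{x}, mem_union_right _ ?_, mem_singleton_self x⟩
        exact mem_image_of_mem _ (mem_sdiff.2 ⟨hx, hcov⟩)
  bot_notMem h := by
    rcases mem_union.1 h with h | h
    · simpa using (mem_powersetCard.1 ((mem_matchings.1 hS).1 h)).2
    · obtain ⟨x, -, hx⟩ := mem_image.1 h
      exact singleton_ne_empty x hx

theorem card_parts_ofMatching (hS : S ∈ matchings s i) : #(ofMatching hS).parts = #s - i := by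
  have hdisj : Disjoint S ((s \ S.biUnion id).image singleton) :=
    disjoint_left.2 fun p hp hp' ↦ by
      obtain ⟨x, -, rfl⟩ := mem_image.1 hp'
      simpa using (mem_powersetCard.1 ((mem_matchings.1 hS).1 hp)).2
  have := two_mul_le_card_of_mem_matchings hS
  rw [ofMatching_parts, card_union_of_disjoint hdisj,
    card_image_of_injective _ singleton_injective,
    card_sdiff_of_subset (biUnion_subset_of_mem_matchings hS), card_biUnion_of_mem_matchings hS,
    (mem_matchings.1 hS).2.1]
  omega

theorem card_le_two_of_mem_parts_ofMatching (hS : S ∈ matchings s i) {p : Finset α}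
    (hp : p ∈ (ofMatching hS).parts) : #p ≤ 2 := by
  rcases mem_union.1 hp with hp | hp
  · exact (mem_powersetCard.1 ((mem_matchings.1 hS).1 hp)).2.le
  · obtain ⟨x, -, rfl⟩ := mem_image.1 hp
    simp

theorem filter_parts_ofMatching (hS : S ∈ matchings s i) :
    {p ∈ (ofMatching hS).parts | #p = 2} = S := by
  ext p
  simp only [mem_filter, ofMatching_parts, mem_union, mem_image]
  constructor
  · rintro ⟨hp | ⟨x, -, rfl⟩, hp2⟩
    · exact hp
    · simp at hp2
  · exact fun hp ↦ ⟨Or.inl hp, (mem_powersetCard.1 ((mem_matchings.1 hS).1 hp)).2⟩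

theorem filter_parts_mem_matchings (P : Finpartition s) (hP : ∀ p ∈ P.parts, #p ≤ 2) :
    {p ∈ P.parts | #p = 2} ∈ matchings s (#s - #P.parts) := by
  refine mem_matchings.2
    ⟨fun p hp ↦ ?_, ?_, P.disjoint.subset (coe_subset.2 (filter_subset _ _))⟩
  · obtain ⟨hp, hp2⟩ := mem_filter.1 hp
    exact mem_powersetCard.2 ⟨P.le hp, hp2⟩
  · have := P.card_parts_add_card_filter_card_eq_two hP
    omega

theorem ofMatching_filter_parts (P : Finpartition s) (hP : ∀ p ∈ P.parts, #p ≤ 2) :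
    ofMatching (P.filter_parts_mem_matchings hP) = P := by
  ext p
  simp only [ofMatching_parts, mem_union, mem_filter, mem_image, mem_sdiff, mem_biUnion, id,
    not_exists, not_and, and_imp]
  constructor
  · rintro (⟨hp, -⟩ | ⟨x, ⟨hx, hxP⟩, rfl⟩)
    · exact hp
    · obtain ⟨q, hq, hxq⟩ := P.exists_mem hx
      obtain ⟨y, rfl⟩ : ∃ y, q = {y} := card_eq_one.1 <| by
        have := (P.nonempty_of_mem_parts hq).card_pos
        have := hP q hq
        have : #q ≠ 2 := fun h ↦ hxP q hq h hxq
        omega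
      rwa [mem_singleton.1 hxq]
  · intro hp
    by_cases hp2 : #p = 2
    · exact Or.inl ⟨hp, hp2⟩
    obtain ⟨x, rfl⟩ : ∃ x, p = {x} := card_eq_one.1 <| by
      have := (P.nonempty_of_mem_parts hp).card_pos
      have := hP p hp
      omega
    refine Or.inr ⟨x, ⟨P.le hp (mem_singleton_self x), fun q hq hq2 hxq ↦ hp2 ?_⟩, rfl⟩
    rwa [P.eq_of_mem_parts hp hq (mem_singleton_self x) hxq]

noncomputable def equivMatchings {n : ℕ} (hn : n ≤ #s) :
    {P : Finpartition s // #P.parts = n ∧ ∀ p ∈ P.parts, #p ≤ 2} ≃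
      matchings s (#s - n) where
  toFun P := ⟨_, P.2.1 ▸ P.1.filter_parts_mem_matchings P.2.2⟩
  invFun S := ⟨ofMatching S.2, by rw [card_parts_ofMatching]; omega,
    fun _ ↦ card_le_two_of_mem_parts_ofMatching S.2⟩
  left_inv P := by
    obtain ⟨P, rfl, hP⟩ := P
    exact Subtype.ext (ofMatching_filter_parts P hP)
  right_inv S := Subtype.ext (filter_parts_ofMatching S.2)

end Finpartition

theorem E_one_eq_card_matchings {n k : ℕ} (h : n ≤ k) :
    E 1 n k = #(matchings (univ : Finset (Fin k)) (k - n)) := by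
  have e := Finpartition.equivMatchings (s := (univ : Finset (Fin k))) (n := n)
    (by rwa [card_univ, Fintype.card_fin])
  rw [card_univ, Fintype.card_fin] at e
  rw [E, ← Nat.card_eq_finsetCard]
  exact Nat.card_congr e

theorem stmt_9 (n : ℕ) :
    (G 1 n : ℚ) = ∑ i ∈ Finset.range (n + 1),
      ((n + i).factorial : ℚ) / ((n - i).factorial * i.factorial * 2 ^ i) := by
  rw [G, ← Ico_add_one_right_eq_Icc, sum_Ico_eq_sum_range,
    show (1 + 1) * n + 1 - n = n + 1 by omega]
  push_cast
  refine sum_congr rfl fun i hi ↦ ?_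
  have hin : i ≤ n := Nat.lt_succ_iff.1 (mem_range.1 hi)
  have hcount := card_matchings_mul (univ : Finset (Fin (n + i))) i
  have hfact := Nat.factorial_mul_descFactorial (show 2 * i ≤ n + i by omega)
  rw [card_univ, Fintype.card_fin] at hcount
  rw [show n + i - 2 * i = n - i by omega] at hfact
  rw [E_one_eq_card_matchings (Nat.le_add_right n i), Nat.add_sub_cancel_left,
    eq_div_iff (by positivity)]
  exact_mod_cast (by rw [← hfact, ← hcount]; ring :
    #(matchings (univ : Finset (Fin (n + i))) i) * ((n - i)! * i ! * 2 ^ i) = (n + i)!)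
end

section
/- As n → ∞, G_1(n) is asymptotic to e · (2n)! / (n! · 2^n); that is, lim_{n→∞} G_1(n) · n! · 2^n / (2n)! = e. -/
/-!
A partition of `k` points into `n` blocks of size at most two is determined by its `k - n`
blocks of size two, i.e. by a matching. An embedding `Fin i × Bool ↪ Fin k` determines an
`i`-matching, and each matching arises from exactly `i! 2^i` embeddings (order the pairs,
orient each pair), so `E 1 n (n + i) = (n + i)! / ((n - i)! i! 2^i)`.
Hence `G 1 n n! 2^n / (2n)! = ∑_{j ≤ n} 2^j n^(j) / ((2n)^(j) j!)`, writing `x^(j)` for the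
falling factorial. The `j`-th term is at most `1/j!` and tends to `1/j!`, so by dominated
convergence the sum tends to `∑ 1/j! = e`.
-/

open Finset Nat Filter Topology Asymptotics

section Partner

variable {α : Type*} [DecidableEq α] {p : Finset α} {x y : α}

/-- For `p = {x, y}` with `x ≠ y`, `partner p x = y`; otherwise the value is unspecified. -/
noncomputable def partner (p : Finset α) (x : α) : α :=
  @Classical.epsilon _ ⟨x⟩ (· ∈ p.erase x)

lemma erase_eq_singleton_partner (hp : #p = 2) (hx : x ∈ p) : p.erase x = {partner p x} := by
  obtain ⟨a, ha⟩ := card_eq_one.1 (by rw [card_erase_of_mem hx, hp] : #(p.erase x) = 1)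
  have h : partner p x ∈ p.erase x := Classical.epsilon_spec ⟨a, by simp [ha]⟩
  rw [ha, mem_singleton] at h
  rw [ha, h]

lemma eq_partner_iff (hp : #p = 2) (hx : x ∈ p) : y = partner p x ↔ y ≠ x ∧ y ∈ p := by
  rw [← mem_singleton, ← erase_eq_singleton_partner hp hx, mem_erase]

lemma partner_ne (hp : #p = 2) (hx : x ∈ p) : partner p x ≠ x :=
  ((eq_partner_iff hp hx).1 rfl).1

lemma partner_mem (hp : #p = 2) (hx : x ∈ p) : partner p x ∈ p :=
  ((eq_partner_iff hp hx).1 rfl).2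

lemma pair_partner (hp : #p = 2) (hx : x ∈ p) : {x, partner p x} = p := by
  rw [← erase_eq_singleton_partner hp hx, insert_erase hx]

end Partner

section Matching

variable {α : Type*} {i : ℕ}

structure IsMatching (i : ℕ) (m : Finset (Finset α)) : Prop where
  card_eq_two : ∀ p ∈ m, #p = 2
  pairwiseDisjoint : (m : Set (Finset α)).PairwiseDisjoint id
  card_eq : #m = i

/-- An enumeration of the pairs of `m`, with a marked element in each pair. -/
abbrev MarkedEnumeration (m : Finset (Finset α)) (i : ℕ) : Type _ :=
  {fc : (Fin i ↪ m) × (Fin i → α) // ∀ j, fc.2 j ∈ (fc.1 j : Finset α)}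

variable {m : Finset (Finset α)}

lemma card_markedEnumeration (hm : IsMatching i m) :
    Nat.card (MarkedEnumeration m i) = i ! * 2 ^ i := by
  classical
  have e : MarkedEnumeration m i ≃ (f : Fin i ↪ m) × (∀ j, (f j : Finset α)) :=
    (Equiv.subtypeProdEquivSigmaSubtype fun (f : Fin i ↪ m) (c : Fin i → α) =>
      ∀ j, c j ∈ (f j : Finset α)).trans
      (Equiv.sigmaCongrRight fun _ => Equiv.subtypePiEquivPi)
  have card_fiber (f : Fin i ↪ m) : Nat.card (∀ j, (f j : Finset α)) = 2 ^ i := by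
    simp [hm.card_eq_two _ (f _).2]
  rw [Nat.card_congr e, Nat.card_sigma, sum_congr rfl fun f _ => card_fiber f, sum_const,
    Finset.card_univ, Fintype.card_embedding_eq, Fintype.card_coe, hm.card_eq, Fintype.card_fin,
    Nat.descFactorial_self, smul_eq_mul]

variable [DecidableEq α]

def pairOf (g : Fin i × Bool ↪ α) (j : Fin i) : Finset α := {g (j, false), g (j, true)}

def matchingOf (g : Fin i × Bool ↪ α) : Finset (Finset α) := univ.image (pairOf g)

lemma mem_pairOf {g : Fin i × Bool ↪ α} {j : Fin i} {x : α} :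
    x ∈ pairOf g j ↔ ∃ b, g (j, b) = x := by
  simp [pairOf, Bool.exists_bool, eq_comm]

lemma card_pairOf (g : Fin i × Bool ↪ α) (j : Fin i) : #(pairOf g j) = 2 :=
  card_pair fun h => by simpa using g.injective h

lemma disjoint_pairOf {g : Fin i × Bool ↪ α} {j j' : Fin i} (h : j ≠ j') :
    Disjoint (pairOf g j) (pairOf g j') := by
  rw [disjoint_left]
  rintro x hx hx'
  obtain ⟨b, rfl⟩ := mem_pairOf.1 hx
  obtain ⟨b', hb'⟩ := mem_pairOf.1 hx'
  exact h (congrArg Prod.fst (g.injective hb')).symm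

lemma pairOf_injective (g : Fin i × Bool ↪ α) : Function.Injective (pairOf g) := by
  intro j j' h
  by_contra hne
  have := disjoint_pairOf (g := g) hne
  rw [h, disjoint_self_iff_empty] at this
  simpa [this] using card_pairOf g j'

lemma isMatching_matchingOf (g : Fin i × Bool ↪ α) : IsMatching i (matchingOf g) where
  card_eq_two := by
    simp only [matchingOf, mem_image, mem_univ, true_and, forall_exists_index]
    rintro _ j rfl
    exact card_pairOf g j
  pairwiseDisjoint := by
    simp only [matchingOf, coe_image, coe_univ, Set.image_univ]
    rintro _ ⟨j, rfl⟩ _ ⟨j', rfl⟩ h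
    exact disjoint_pairOf fun hj => h (hj ▸ rfl)
  card_eq := by simp [matchingOf, card_image_of_injective _ (pairOf_injective g)]

namespace MarkedEnumeration

noncomputable def point (e : MarkedEnumeration m i) (jb : Fin i × Bool) : α :=
  bif jb.2 then partner (e.1.1 jb.1) (e.1.2 jb.1) else e.1.2 jb.1

lemma point_mem (hm : IsMatching i m) (e : MarkedEnumeration m i) (jb : Fin i × Bool) :
    e.point jb ∈ (e.1.1 jb.1 : Finset α) := by
  obtain ⟨j, _ | _⟩ := jb
  · exact e.2 j
  · exact partner_mem (hm.card_eq_two _ (e.1.1 j).2) (e.2 j)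

lemma pair_point (hm : IsMatching i m) (e : MarkedEnumeration m i) (j : Fin i) :
    {e.point (j, false), e.point (j, true)} = (e.1.1 j : Finset α) :=
  pair_partner (hm.card_eq_two _ (e.1.1 j).2) (e.2 j)

lemma point_injective (hm : IsMatching i m) (e : MarkedEnumeration m i) :
    Function.Injective e.point := by
  rintro ⟨j, b⟩ ⟨j', b'⟩ h
  obtain rfl : j = j' := e.1.1.injective <| Subtype.ext <|
    hm.pairwiseDisjoint.elim_finset (e.1.1 j).2 (e.1.1 j').2 (e.point (j, b))
      (point_mem hm e (j, b)) (h ▸ point_mem hm e (j', b'))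
  have hne := partner_ne (hm.card_eq_two _ (e.1.1 j).2) (e.2 j)
  cases b <;> cases b' <;> simp only [point, cond_true, cond_false] at h
  · rfl
  · exact absurd h.symm hne
  · exact absurd h hne
  · rfl

noncomputable def toEmbedding (hm : IsMatching i m) (e : MarkedEnumeration m i) :
    Fin i × Bool ↪ α :=
  ⟨e.point, point_injective hm e⟩

lemma matchingOf_toEmbedding (hm : IsMatching i m) (e : MarkedEnumeration m i) :
    matchingOf (toEmbedding hm e) = m := by
  have himage : univ.image (fun j => (e.1.1 j : Finset α)) = m := by
    refine eq_of_subset_of_card_le (fun p hp => ?_) ?_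
    · obtain ⟨j, -, rfl⟩ := mem_image.1 hp
      exact (e.1.1 j).2
    · rw [card_image_of_injective (f := fun j => (e.1.1 j : Finset α)) univ
        (Subtype.val_injective.comp e.1.1.injective), hm.card_eq, Finset.card_univ,
        Fintype.card_fin]
  exact (image_congr fun j _ => pair_point hm e j).trans himage

end MarkedEnumeration

noncomputable def fiberEquivMarkedEnumeration (hm : IsMatching i m) :
    {g : Fin i × Bool ↪ α // matchingOf g = m} ≃ MarkedEnumeration m i where
  toFun g := ⟨(⟨fun j => ⟨pairOf g j,
      g.2.subst (motive := (pairOf g.1 j ∈ ·)) (mem_image_of_mem _ (mem_univ j))⟩,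
      fun _ _ h => pairOf_injective g.1 (congrArg Subtype.val h)⟩, fun j => g.1 (j, false)),
    fun j => by simp [pairOf]⟩
  invFun e :=
    ⟨MarkedEnumeration.toEmbedding hm e, MarkedEnumeration.matchingOf_toEmbedding hm e⟩
  left_inv g := by
    refine Subtype.ext <| DFunLike.ext _ _ fun ⟨j, b⟩ => ?_
    cases b
    · rfl
    · refine ((eq_partner_iff (card_pairOf g.1 j) (by simp [pairOf])).2
        ⟨fun h => ?_, by simp [pairOf]⟩).symm
      simpa using g.1.injective h
  right_inv e := by
    refine Subtype.ext <| Prod.ext (DFunLike.ext _ _ fun j => Subtype.ext ?_) rfl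
    exact MarkedEnumeration.pair_point hm e j

lemma card_isMatching_mul_eq_descFactorial [Fintype α] (i : ℕ) :
    Nat.card {m : Finset (Finset α) // IsMatching i m} * (i ! * 2 ^ i) =
      (Fintype.card α).descFactorial (2 * i) := by
  classical
  let toMatching (g : Fin i × Bool ↪ α) : {m : Finset (Finset α) // IsMatching i m} :=
    ⟨matchingOf g, isMatching_matchingOf g⟩
  have card_fiber (m : {m : Finset (Finset α) // IsMatching i m}) :
      Nat.card {g // toMatching g = m} = i ! * 2 ^ i := by
    rw [← card_markedEnumeration m.2, ← Nat.card_congr (fiberEquivMarkedEnumeration m.2)]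
    exact Nat.card_congr (Equiv.subtypeEquivRight fun g => Subtype.ext_iff)
  calc Nat.card {m : Finset (Finset α) // IsMatching i m} * (i ! * 2 ^ i)
      = ∑ m, Nat.card {g // toMatching g = m} := by
        rw [sum_congr rfl fun m _ => card_fiber m, sum_const, Finset.card_univ,
          Nat.card_eq_fintype_card, smul_eq_mul]
    _ = Nat.card (Fin i × Bool ↪ α) := by
      rw [← Nat.card_sigma, Nat.card_congr (Equiv.sigmaFiberEquiv toMatching)]
    _ = (Fintype.card α).descFactorial (2 * i) := by
      simp [Nat.card_eq_fintype_card, Fintype.card_embedding_eq, mul_comm]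

end Matching

lemma Finpartition.eq_of_parts_subset {α : Type*} [DecidableEq α] {s : Finset α}
    {P Q : Finpartition s} (h : P.parts ⊆ Q.parts) : P = Q := by
  refine Finpartition.ext (Subset.antisymm h fun q hq => ?_)
  obtain ⟨x, hx⟩ := Q.nonempty_of_mem_parts hq
  obtain ⟨p, hp, hxp⟩ := P.exists_mem (Q.subset hq hx)
  rwa [Q.eq_of_mem_parts hq (h hp) hx hxp]

section Partition

variable {α : Type*} [Fintype α] [DecidableEq α] {i : ℕ} {m : Finset (Finset α)}

def Finpartition.ofMatching_s12 (hm : IsMatching i m) : Finpartition (univ : Finset α) :=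
  .ofExistsUnique (m ∪ (univ \ m.biUnion id).image singleton) (fun _ _ => subset_univ _)
    (fun a _ => by
      by_cases ha : a ∈ m.biUnion id
      · obtain ⟨p, hp, hap⟩ := mem_biUnion.1 ha
        refine ⟨p, ⟨mem_union_left _ hp, hap⟩, fun t ⟨ht, hat⟩ => ?_⟩
        rcases mem_union.1 ht with ht | ht
        · exact hm.pairwiseDisjoint.elim_finset ht hp a hat hap
        · obtain ⟨y, hy, rfl⟩ := mem_image.1 ht
          rw [mem_singleton.1 hat] at ha
          exact absurd ha (mem_sdiff.1 hy).2
      · refine ⟨{a}, ⟨mem_union_right _ (mem_image_of_mem _ (by simpa using ha)),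
          mem_singleton_self a⟩, fun t ⟨ht, hat⟩ => ?_⟩
        rcases mem_union.1 ht with ht | ht
        · exact absurd (mem_biUnion.2 ⟨t, ht, hat⟩) ha
        · obtain ⟨y, -, rfl⟩ := mem_image.1 ht
          rw [mem_singleton.1 hat])
    (fun h => by
      rcases mem_union.1 h with h | h
      · simpa using hm.card_eq_two _ h
      · simp at h)

lemma Finpartition.parts_ofMatching (hm : IsMatching i m) :
    (Finpartition.ofMatching_s12 hm).parts = m ∪ (univ \ m.biUnion id).image singleton := rfl

lemma Finpartition.card_le_two_of_mem_ofMatching (hm : IsMatching i m) :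
    ∀ p ∈ (Finpartition.ofMatching_s12 hm).parts, #p ≤ 2 := by
  intro p hp
  rcases mem_union.1 hp with hp | hp
  · exact (hm.card_eq_two p hp).le
  · obtain ⟨x, -, rfl⟩ := mem_image.1 hp
    simp

lemma Finpartition.filter_card_eq_two_ofMatching (hm : IsMatching i m) :
    (Finpartition.ofMatching_s12 hm).parts.filter (#· = 2) = m := by
  rw [parts_ofMatching, filter_union, filter_true_of_mem hm.card_eq_two,
    filter_false_of_mem (by simp), union_empty]

variable {P : Finpartition (univ : Finset α)}

lemma Finpartition.card_parts_add_card_filter_card_eq_two_s12 (hP : ∀ p ∈ P.parts, #p ≤ 2) :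
    #P.parts + #(P.parts.filter (#· = 2)) = Fintype.card α := by
  have hsize (p) (hp : p ∈ P.parts) : #p = 1 + if #p = 2 then 1 else 0 := by
    have := (P.nonempty_of_mem_parts hp).card_pos
    have := hP p hp
    split_ifs <;> omega
  rw [← Finset.card_univ, ← P.sum_card_parts, sum_congr rfl hsize, sum_add_distrib, sum_boole]
  simp

lemma Finpartition.isMatching_filter_card_eq_two (hP : ∀ p ∈ P.parts, #p ≤ 2)
    (hcard : #P.parts + i = Fintype.card α) : IsMatching i (P.parts.filter (#· = 2)) where
  card_eq_two _ hp := (mem_filter.1 hp).2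
  pairwiseDisjoint := P.disjoint.subset (coe_subset.2 (filter_subset _ _))
  card_eq := by have := card_parts_add_card_filter_card_eq_two_s12 hP; omega

lemma Finpartition.ofMatching_filter_card_eq_two (hP : ∀ p ∈ P.parts, #p ≤ 2)
    (hm : IsMatching i (P.parts.filter (#· = 2))) : Finpartition.ofMatching_s12 hm = P := by
  refine (eq_of_parts_subset fun p hp => ?_).symm
  rw [parts_ofMatching]
  by_cases h2 : #p = 2
  · exact mem_union_left _ (mem_filter.2 ⟨hp, h2⟩)
  obtain ⟨x, rfl⟩ : ∃ x, p = {x} := card_eq_one.1 <| by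
    have := (P.nonempty_of_mem_parts hp).card_pos
    have := hP p hp
    omega
  refine mem_union_right _ (mem_image_of_mem _ (mem_sdiff.2 ⟨mem_univ x, fun hx => ?_⟩))
  obtain ⟨q, hq, hxq⟩ := mem_biUnion.1 hx
  rw [P.eq_of_mem_parts (mem_filter.1 hq).1 hp hxq (mem_singleton_self x)] at hq
  simp at hq

def Finpartition.equivMatching {n : ℕ} (hα : Fintype.card α = n + i) :
    {P : Finpartition (univ : Finset α) // #P.parts = n ∧ ∀ p ∈ P.parts, #p ≤ 2} ≃
      {m : Finset (Finset α) // IsMatching i m} where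
  toFun P :=
    ⟨P.1.parts.filter (#· = 2), isMatching_filter_card_eq_two P.2.2 (by rw [P.2.1, hα])⟩
  invFun m := ⟨ofMatching_s12 m.2, by
      have := card_parts_add_card_filter_card_eq_two_s12 (card_le_two_of_mem_ofMatching m.2)
      rw [filter_card_eq_two_ofMatching, m.2.card_eq] at this
      omega, card_le_two_of_mem_ofMatching m.2⟩
  left_inv P := Subtype.ext <| ofMatching_filter_card_eq_two P.2.2 <|
    isMatching_filter_card_eq_two (i := i) P.2.2 (by rw [P.2.1, hα])
  right_inv m := Subtype.ext (filter_card_eq_two_ofMatching m.2)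

end Partition

lemma E_one_mul_eq_factorial (n i : ℕ) (hi : i ≤ n) :
    E 1 n (n + i) * ((n - i)! * i ! * 2 ^ i) = (n + i)! := by
  have hE : E 1 n (n + i) = Nat.card {m : Finset (Finset (Fin (n + i))) // IsMatching i m} :=
    Nat.card_congr (Finpartition.equivMatching (Fintype.card_fin _))
  have hcount := card_isMatching_mul_eq_descFactorial (α := Fin (n + i)) i
  rw [Fintype.card_fin] at hcount
  rw [hE, ← factorial_mul_descFactorial (show 2 * i ≤ n + i by omega), ← hcount,
    show n + i - 2 * i = n - i by omega]
  ring

lemma G_one_eq_sum (n : ℕ) :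
    (G 1 n : ℝ) = ∑ i ∈ range (n + 1), ((n + i)! : ℝ) / ((n - i)! * i ! * 2 ^ i) := by
  rw [G, show (1 + 1) * n = n + n by ring, ← Ico_add_one_right_eq_Icc, sum_Ico_eq_sum_range,
    show n + n + 1 - n = n + 1 by omega, Nat.cast_sum]
  refine sum_congr rfl fun i hi => eq_div_of_mul_eq (by positivity) ?_
  exact_mod_cast E_one_mul_eq_factorial n i (by simpa [Nat.lt_succ_iff] using hi)

/-- The term of index `i = n - j` of `G 1 n * n! * 2^n / (2n)!`; it vanishes for `j > n`. -/
noncomputable def normalizedTerm (n j : ℕ) : ℝ :=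
  2 ^ j * n.descFactorial j / ((2 * n).descFactorial j * j !)

lemma G_one_mul_div_factorial_eq_sum (n : ℕ) :
    (G 1 n : ℝ) * n ! * 2 ^ n / (2 * n)! = ∑ j ∈ range (n + 1), normalizedTerm n j := by
  rw [G_one_eq_sum, sum_mul, sum_mul, sum_div, ← sum_range_reflect]
  refine sum_congr rfl fun j hj => ?_
  have hj : j ≤ n := by simpa [Nat.lt_succ_iff] using hj
  rw [show n + 1 - 1 - j = n - j by omega, show n + (n - j) = 2 * n - j by omega,
    show n - (n - j) = j by omega, normalizedTerm,
    ← factorial_mul_descFactorial hj, ← factorial_mul_descFactorial (show j ≤ 2 * n by omega),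
    show (2 : ℝ) ^ n = 2 ^ (n - j) * 2 ^ j by rw [← pow_add, Nat.sub_add_cancel hj]]
  have : ((2 * n).descFactorial j : ℝ) ≠ 0 := by
    exact_mod_cast (descFactorial_eq_zero_iff_lt.not.2 (by omega))
  push_cast
  field_simp

lemma normalizedTerm_eq_zero {n j : ℕ} (h : n < j) : normalizedTerm n j = 0 := by
  simp [normalizedTerm, descFactorial_eq_zero_iff_lt.2 h]

lemma normalizedTerm_nonneg (n j : ℕ) : 0 ≤ normalizedTerm n j := by
  unfold normalizedTerm; positivity

lemma two_pow_mul_descFactorial_le (n j : ℕ) :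
    2 ^ j * n.descFactorial j ≤ (2 * n).descFactorial j := by
  induction j with
  | zero => simp
  | succ j ih =>
    rw [descFactorial_succ, descFactorial_succ, pow_succ]
    calc 2 ^ j * 2 * ((n - j) * n.descFactorial j)
        = 2 * (n - j) * (2 ^ j * n.descFactorial j) := by ring
      _ ≤ (2 * n - j) * (2 * n).descFactorial j := Nat.mul_le_mul (by omega) ih

lemma normalizedTerm_le (n j : ℕ) : normalizedTerm n j ≤ (j ! : ℝ)⁻¹ := by
  calc normalizedTerm n j
      ≤ ((2 * n).descFactorial j : ℝ) / ((2 * n).descFactorial j * j !) := by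
        unfold normalizedTerm
        gcongr
        exact_mod_cast two_pow_mul_descFactorial_le n j
    _ = ((2 * n).descFactorial j : ℝ) / (2 * n).descFactorial j / j ! := div_mul_eq_div_div ..
    _ ≤ 1 / j ! := by gcongr; exact div_self_le_one _
    _ = (j ! : ℝ)⁻¹ := one_div _

lemma tendsto_normalizedTerm (j : ℕ) :
    Tendsto (fun n => normalizedTerm n j) atTop (𝓝 (j ! : ℝ)⁻¹) := by
  have hnum : (fun n : ℕ => (2 ^ j * n.descFactorial j : ℝ)) ~[atTop]
      fun n => ((2 * n : ℕ) : ℝ) ^ j := by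
    refine (IsEquivalent.refl.mul (isEquivalent_descFactorial j)).congr_right ?_
    filter_upwards with n
    simp [mul_pow]
  have hden : (fun n : ℕ => ((2 * n).descFactorial j : ℝ)) ~[atTop]
      fun n => ((2 * n : ℕ) : ℝ) ^ j :=
    (isEquivalent_descFactorial j).comp_tendsto (tendsto_id.const_mul_atTop' two_pos)
  have hden_ne : ∀ᶠ n : ℕ in atTop, ((2 * n).descFactorial j : ℝ) ≠ 0 := by
    filter_upwards [eventually_ge_atTop j] with n hn
    exact_mod_cast descFactorial_eq_zero_iff_lt.not.2 (by omega)
  have hratio := (isEquivalent_iff_tendsto_one hden_ne).1 (hnum.trans hden.symm)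
  simpa [normalizedTerm, div_mul_eq_div_div, one_div] using hratio.div_const (j ! : ℝ)

open Filter in
theorem stmt_12 :
    Tendsto (fun n : ℕ =>
        (G 1 n : ℝ) * n.factorial * 2 ^ n / (2 * n).factorial)
      atTop (nhds (Real.exp 1)) := by
  have hexp : HasSum (fun j : ℕ => (j ! : ℝ)⁻¹) (Real.exp 1) := by
    simpa [Real.exp_eq_exp_ℝ] using NormedSpace.expSeries_div_hasSum_exp (1 : ℝ)
  have hlim : Tendsto (fun n => ∑' j, normalizedTerm n j) atTop (𝓝 (Real.exp 1)) := by
    rw [← hexp.tsum_eq]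
    refine tendsto_tsum_of_dominated_convergence hexp.summable tendsto_normalizedTerm
      (.of_forall fun n j => ?_)
    rw [Real.norm_of_nonneg (normalizedTerm_nonneg n j)]
    exact normalizedTerm_le n j
  refine hlim.congr fun n => ?_
  rw [G_one_mul_div_factorial_eq_sum,
    tsum_eq_sum (s := range (n + 1)) fun j hj => normalizedTerm_eq_zero (by simpa using hj)]
end

section
/- For n ≥ 0 and n ≤ k ≤ 3n, with η := k - n, E_2(n,k) = Σ_{c=max(0, η-n)}^{⌊η/2⌋} k! / ((n-η+c)! · (η-2c)! · c! · 2^{η-c} · 3^c). -/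
open Finset Nat

namespace Multiset

theorem eq_replicate_one_two_three {m : Multiset ℕ} (hm0 : 0 ∉ m) (hm3 : ∀ j ∈ m, j ≤ 3) :
    m = replicate (count 1 m) 1 + replicate (count 2 m) 2 + replicate (count 3 m) 3 := by
  ext j
  simp only [count_add, count_replicate]
  by_cases hj : j ∈ m
  · have := hm3 j hj
    interval_cases j <;> simp_all
  · rw [count_eq_zero.2 hj]
    split_ifs <;> simp_all

theorem card_and_sum_eq_of_forall_le_three {m : Multiset ℕ} (hm0 : 0 ∉ m) (hm3 : ∀ j ∈ m, j ≤ 3) :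
    card m = count 1 m + count 2 m + count 3 m ∧
      m.sum = count 1 m + 2 * count 2 m + 3 * count 3 m := by
  have hm := eq_replicate_one_two_three hm0 hm3
  constructor
  · simpa using congrArg card hm
  · simpa [mul_comm] using congrArg sum hm

theorem count_three_mem_Icc {m : Multiset ℕ} (hm0 : 0 ∉ m) (hm3 : ∀ j ∈ m, j ≤ 3) :
    count 3 m ∈ Finset.Icc (m.sum - card m - card m) ((m.sum - card m) / 2) := by
  obtain ⟨hcard, hsum⟩ := card_and_sum_eq_of_forall_le_three hm0 hm3
  rw [Finset.mem_Icc]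
  omega

theorem eq_replicate_one_two_three_iff {m : Multiset ℕ} {n k c : ℕ} (hm0 : 0 ∉ m)
    (hk : m.sum = k) (hc : c ∈ Finset.Icc (k - n - n) ((k - n) / 2)) :
    m = replicate (n + c - (k - n)) 1 + replicate (k - n - 2 * c) 2 + replicate c 3 ↔
      (card m = n ∧ ∀ j ∈ m, j ≤ 3) ∧ count 3 m = c := by
  rw [Finset.mem_Icc] at hc
  constructor
  · rintro rfl
    simp only [sum_add, sum_replicate, smul_eq_mul] at hk
    simp only [card_add, card_replicate, mem_add, count_add, count_replicate]
    refine ⟨⟨by omega, ?_⟩, by simp⟩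
    rintro j ((h | h) | h) <;> simp [eq_of_mem_replicate h]
  · rintro ⟨⟨hcard, hm3⟩, rfl⟩
    obtain ⟨hcard', hsum⟩ := card_and_sum_eq_of_forall_le_three hm0 hm3
    conv_lhs => rw [eq_replicate_one_two_three hm0 hm3]
    congr 3 <;> omega

theorem cast_bell_replicate_one_two_three (a b c : ℕ) :
    ((replicate a 1 + replicate b 2 + replicate c 3).bell : ℚ) =
      (a + 2 * b + 3 * c)! / (a ! * b ! * c ! * 2 ^ (b + c) * 3 ^ c) := by
  set m := replicate a 1 + replicate b 2 + replicate c 3 with hm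
  have hsub : m.toFinset.erase 0 ⊆ {1, 2, 3} := fun j hj => by
    simp only [hm, toFinset_add, toFinset_replicate, union_assoc, mem_erase, ne_eq,
      Finset.mem_union] at hj
    grind
  have hcounts : ∏ j ∈ m.toFinset.erase 0, (m.count j)! = a ! * b ! * c ! := by
    rw [prod_subset hsub fun j hj3 hj => ?_]
    · simp [hm, count_replicate, mul_assoc]
    have hj0 : j ≠ 0 := by
      simp only [mem_insert, Finset.mem_singleton] at hj3
      omega
    rw [count_eq_zero.2 fun h => hj (mem_erase.2 ⟨hj0, mem_toFinset.2 h⟩), factorial_zero]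
  have hbell := bell_mul_eq m
  rw [hcounts] at hbell
  simp only [hm, map_add, map_replicate, factorial_one, factorial_two, prod_add, prod_replicate,
    one_pow, one_mul, sum_add, sum_replicate, smul_eq_mul, mul_one] at hbell
  rw [← hm, show (3 : ℕ)! = 2 * 3 from rfl, mul_pow] at hbell
  rw [eq_div_iff (by positivity), show a + 2 * b + 3 * c = a + b * 2 + c * 3 by ring, ← hbell]
  push_cast
  ring

end Multiset

namespace Finset

theorem card_filter_mem_and_card_eq {α : Type*} [DecidableEq α] {s : Finset α} {x : α}
    (hx : x ∈ s) {j : ℕ} (hj : j ≠ 0) :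
    #{B ∈ s.powerset | x ∈ B ∧ #B = j} = (#s - 1).choose (j - 1) := by
  obtain ⟨i, rfl⟩ := Nat.exists_eq_add_one_of_ne_zero hj
  have hxt : x ∉ s.erase x := notMem_erase x s
  have hfilter : {B ∈ s.powerset | x ∈ B ∧ #B = i + 1} = {B ∈ s.powersetCard (i + 1) | x ∈ B} := by
    rw [powersetCard_eq_filter, filter_filter]
    exact filter_congr fun B _ => and_comm
  rw [hfilter, ← insert_erase hx, powersetCard_succ_insert hxt, filter_union,
    filter_false_of_mem fun B hB hxB => hxt ((mem_powersetCard.1 hB).1 hxB),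
    empty_union, filter_true_of_mem fun B hB => by
      obtain ⟨C, -, rfl⟩ := mem_image.1 hB
      exact mem_insert_self x C,
    card_image_of_injOn, card_powersetCard, card_insert_of_notMem hxt, Nat.add_sub_cancel,
    Nat.add_sub_cancel]
  intro C hC D hD hCD
  have hxC : x ∉ C := fun h => hxt ((mem_powersetCard.1 hC).1 h)
  have hxD : x ∉ D := fun h => hxt ((mem_powersetCard.1 hD).1 h)
  simpa [erase_insert hxC, erase_insert hxD] using congrArg (·.erase x) hCD

end Finset

namespace Finpartition

variable {α : Type*} [DecidableEq α] {s : Finset α}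

def partSizes (P : Finpartition s) : Multiset ℕ := P.parts.val.map Finset.card

theorem mem_partSizes {P : Finpartition s} {j : ℕ} : j ∈ P.partSizes ↔ ∃ p ∈ P.parts, #p = j :=
  Multiset.mem_map

theorem card_partSizes (P : Finpartition s) : Multiset.card P.partSizes = #P.parts :=
  Multiset.card_map _ _

theorem sum_partSizes (P : Finpartition s) : P.partSizes.sum = #s := by
  rw [← P.sum_card_parts, Finset.sum_eq_multiset_sum]
  rfl

theorem zero_notMem_partSizes (P : Finpartition s) : 0 ∉ P.partSizes := by
  rw [mem_partSizes]
  rintro ⟨p, hp, hp0⟩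
  exact P.ne_bot hp (Finset.card_eq_zero.1 hp0)

theorem partSizes_extend {B t : Finset α} (Q : Finpartition s) (hB : B ≠ ⊥) (hsB : Disjoint s B)
    (ht : s ⊔ B = t) : (Q.extend hB hsB ht).partSizes = #B ::ₘ Q.partSizes := by
  have hBQ : B ∉ Q.parts := fun h => hB (hsB.symm.eq_bot_of_le (Q.le h))
  simp [partSizes, extend_parts, Finset.insert_val_of_notMem hBQ]

theorem parts_avoid_of_mem_s14 {P : Finpartition s} {B : Finset α} (hB : B ∈ P.parts) :
    (P.avoid B).parts = P.parts.erase B := by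
  ext C
  simp only [mem_avoid, mem_erase]
  constructor
  · rintro ⟨D, hD, hDB, rfl⟩
    have hDB' : D ≠ B := by rintro rfl; exact hDB le_rfl
    have hdisj : Disjoint D B := P.disjoint hD hB hDB'
    rw [sdiff_eq_self_of_disjoint hdisj]
    exact ⟨hDB', hD⟩
  · rintro ⟨hCB, hC⟩
    have hdisj : Disjoint C B := P.disjoint hC hB hCB
    refine ⟨C, hC, fun hle => P.ne_bot hC (hdisj.eq_bot_of_le hle), sdiff_eq_self_of_disjoint hdisj⟩

theorem extend_avoid {P : Finpartition s} {B : Finset α} (hB : B ∈ P.parts) :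
    (P.avoid B).extend (P.ne_bot hB) sdiff_disjoint (sdiff_sup_cancel (P.le hB)) = P :=
  Finpartition.ext <| by rw [extend_parts, parts_avoid_of_mem_s14 hB, insert_erase hB]

theorem card_filter_partSizes_part_eq {m : Multiset ℕ} {x : α} {B : Finset α} (hBs : B ⊆ s)
    (hxB : x ∈ B) (hBm : #B ∈ m) :
    #{P : Finpartition s | P.partSizes = m ∧ P.part x = B} =
      #{Q : Finpartition (s \ B) | Q.partSizes = m.erase #B} := by
  have hB : B ≠ ⊥ := ne_empty_of_mem hxB
  refine card_bij' (fun P _ => P.avoid B)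
    (fun Q _ => Q.extend hB sdiff_disjoint (sdiff_sup_cancel hBs)) ?_ ?_ ?_ ?_
  · rintro P hP
    obtain ⟨hPm, hPx⟩ := (mem_filter.1 hP).2
    have hBP : B ∈ P.parts := hPx ▸ P.part_mem.2 (hBs hxB)
    have hsizes := congrArg partSizes (extend_avoid hBP)
    rw [partSizes_extend, hPm] at hsizes
    simp [← hsizes]
  · rintro Q hQ
    have hQm : Q.partSizes = m.erase #B := (mem_filter.1 hQ).2
    simp only [mem_filter, mem_univ, true_and]
    exact ⟨by rw [partSizes_extend, hQm, Multiset.cons_erase hBm],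
      part_eq_of_mem _ (mem_insert_self B Q.parts) hxB⟩
  · rintro P hP
    exact extend_avoid ((mem_filter.1 hP).2.2 ▸ P.part_mem.2 (hBs hxB))
  · rintro Q -
    have hBQ : B ∉ Q.parts := fun h => hB (sdiff_disjoint.symm.eq_bot_of_le (Q.le h))
    exact Finpartition.ext <| by
      rw [parts_avoid_of_mem_s14 (mem_insert_self B Q.parts), extend_parts, erase_insert hBQ]

theorem card_filter_partSizes_eq_bell {m : Multiset ℕ} (hm0 : 0 ∉ m) (hms : m.sum = #s) :
    #{P : Finpartition s | P.partSizes = m} = m.bell := by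
  induction hN : #s using Nat.strong_induction_on generalizing s m with
  | _ N ih =>
  rcases s.eq_empty_or_nonempty with rfl | ⟨x, hx⟩
  · obtain rfl : m = 0 := Multiset.eq_zero_of_forall_notMem fun j hj =>
      hm0 (Multiset.sum_eq_zero_iff.1 (hms.trans card_empty) j hj ▸ hj)
    have hparts (P : Finpartition (∅ : Finset α)) : P.parts = ∅ := parts_eq_empty_iff.2 rfl
    rw [filter_true_of_mem fun P _ => by simp [partSizes, hparts], Finset.card_univ,
      Multiset.bell_zero]
    exact Fintype.card_unique (α := Finpartition (⊥ : Finset α))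
  obtain ⟨n, rfl⟩ : ∃ n, N = n + 1 := Nat.exists_eq_add_one.2 (hN ▸ card_pos.2 ⟨x, hx⟩)
  let p : (n + 1).Partition :=
    ⟨m, fun hj => Nat.pos_of_ne_zero fun h => hm0 (h ▸ hj), hms.trans hN⟩
  set D : Finset (Finset α) := {B ∈ s.powerset | x ∈ B ∧ #B ∈ m} with hD
  have hblocks (j : ℕ) (hj : j ∈ m) :
      #{B ∈ D | #B = j} = n.choose (j - 1) := by
    rw [← Nat.add_sub_cancel n 1, ← hN, ← card_filter_mem_and_card_eq hx (p.parts_pos hj).ne',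
      filter_filter]
    exact congrArg card <| filter_congr fun B _ =>
      ⟨fun ⟨⟨hxB, _⟩, hB⟩ => ⟨hxB, hB⟩, fun ⟨hxB, hB⟩ => ⟨⟨hxB, hB ▸ hj⟩, hB⟩⟩
  calc #{P : Finpartition s | P.partSizes = m}
      = ∑ B ∈ D, #{P : Finpartition s | P.partSizes = m ∧ P.part x = B} := by
        rw [card_eq_sum_card_fiberwise (f := (·.part x)) (t := D) fun P hP => ?_]
        · simp_rw [filter_filter]
        have hPm : P.partSizes = m := (mem_filter.1 hP).2
        rw [mem_coe, hD, mem_filter, mem_powerset]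
        exact ⟨P.le (P.part_mem.2 hx), P.mem_part hx,
          hPm ▸ mem_partSizes.2 ⟨_, P.part_mem.2 hx, rfl⟩⟩
    _ = ∑ B ∈ D, (m.erase #B).bell := by
        refine sum_congr rfl fun B hB => ?_
        obtain ⟨hBs, hxB, hBm⟩ : B ⊆ s ∧ x ∈ B ∧ #B ∈ m := by simpa [hD] using hB
        have hsum := Multiset.sum_erase hBm
        have hB0 : 0 < #B := card_pos.2 ⟨x, hxB⟩
        rw [card_filter_partSizes_part_eq hBs hxB hBm]
        exact ih _ (by rw [card_sdiff_of_subset hBs]; omega)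
          (fun h => hm0 (Multiset.mem_of_mem_erase h))
          (by rw [card_sdiff_of_subset hBs]; omega) rfl
    _ = ∑ j ∈ m.toFinset, n.choose (j - 1) * (m.erase j).bell := by
        rw [← sum_fiberwise_of_maps_to (g := card) (t := m.toFinset)
          fun B hB => Multiset.mem_toFinset.2 (mem_filter.1 hB).2.2]
        refine sum_congr rfl fun j hj => ?_
        rw [sum_congr rfl fun B hB => by rw [(mem_filter.1 hB).2], sum_const, smul_eq_mul,
          hblocks j (Multiset.mem_toFinset.1 hj)]
    _ = m.bell := (Nat.bell_eq_sum_erase p).symm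

theorem card_filter_count_three_partSizes {n k c : ℕ} (hs : #s = k) (hn : n ≤ k)
    (hc : c ∈ Icc (k - n - n) ((k - n) / 2)) :
    #{P : Finpartition s |
        (Multiset.card P.partSizes = n ∧ ∀ j ∈ P.partSizes, j ≤ 3) ∧ P.partSizes.count 3 = c} =
      (Multiset.replicate (n + c - (k - n)) 1 + Multiset.replicate (k - n - 2 * c) 2 +
        Multiset.replicate c 3).bell := by
  have hc' := mem_Icc.1 hc
  rw [← card_filter_partSizes_eq_bell (s := s) (by simp [Multiset.mem_replicate])
    (by simp only [Multiset.sum_add, Multiset.sum_replicate, smul_eq_mul, mul_one]; omega)]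
  refine congrArg card (filter_congr fun P _ => ?_)
  exact (Multiset.eq_replicate_one_two_three_iff P.zero_notMem_partSizes
    (P.sum_partSizes.trans hs) hc).symm

end Finpartition

theorem E_eq_card_filter_partSizes (σ n k : ℕ) :
    E σ n k = #{P : Finpartition (univ : Finset (Fin k)) |
      Multiset.card P.partSizes = n ∧ ∀ j ∈ P.partSizes, j ≤ σ + 1} := by
  rw [E, Nat.card_eq_fintype_card, Fintype.card_subtype]
  exact congrArg card (filter_congr fun P _ => by
    simp [Finpartition.card_partSizes, Finpartition.mem_partSizes])

theorem stmt_14_general (n k : ℕ) (h1 : n ≤ k) :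
    (E 2 n k : ℚ) = ∑ c ∈ Finset.Icc ((k - n) - n) ((k - n) / 2),
      (k.factorial : ℚ) /
        ((n + c - (k - n)).factorial * ((k - n) - 2 * c).factorial * c.factorial *
          2 ^ ((k - n) - c) * 3 ^ c) := by
  have hk : #(univ : Finset (Fin k)) = k := card_fin k
  rw [E_eq_card_filter_partSizes, show (2 : ℕ) + 1 = 3 from rfl,
    card_eq_sum_card_fiberwise (f := fun P => P.partSizes.count 3)
      (t := Icc (k - n - n) ((k - n) / 2)) fun P hP => ?_, Nat.cast_sum]
  · refine sum_congr rfl fun c hc => ?_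
    rw [filter_filter, Finpartition.card_filter_count_three_partSizes hk h1 hc,
      Multiset.cast_bell_replicate_one_two_three]
    rw [mem_Icc] at hc
    rw [show n + c - (k - n) + 2 * (k - n - 2 * c) + 3 * c = k by omega,
      show k - n - 2 * c + c = k - n - c by omega]
  · obtain ⟨hn, h3⟩ := (mem_filter.1 hP).2
    have hc := Multiset.count_three_mem_Icc P.zero_notMem_partSizes h3
    rwa [P.sum_partSizes, hk, hn] at hc

theorem stmt_14 (n k : ℕ) (h1 : n ≤ k) (h2 : k ≤ 3 * n) :
    (E 2 n k : ℚ) = ∑ c ∈ Finset.Icc ((k - n) - n) ((k - n) / 2),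
      (k.factorial : ℚ) /
        ((n + c - (k - n)).factorial * ((k - n) - 2 * c).factorial * c.factorial *
          2 ^ ((k - n) - c) * 3 ^ c) :=
  stmt_14_general n k h1
end

section
/- For each σ ≥ 0 and n ≥ 1, the number of possible play-out scenarios of the gift exchange game with n gifts and steal limit σ, in which guests take gifts from the pool in the fixed order 1,2,...,n, equals Σ_{k=n-1}^{(σ+1)(n-1)} E_σ(n-1, k). Equivalently: the number of finite sequences over {1,...,n} that begin with 1, end with n, contain n exactly once, contain each i ∈ {1,...,n-1} at least once and at most σ+1 times, and in which the first occurrence of i (for i ≥ 2) appears only after an occurrence of i−1, equals Σ_{k=n-1}^{(σ+1)(n-1)} E_σ(n-1, k). -/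
open Finset

theorem List.idxOf_le_of_getElem_eq {α : Type*} [BEq α] [LawfulBEq α] {l : List α} {a : α}
    {i : ℕ} (hi : i < l.length) (h : l[i] = a) : l.idxOf a ≤ i := by
  by_contra! hlt
  have := List.not_of_lt_findIdx hlt
  simp_all

theorem List.count_ofFn {α : Type*} [DecidableEq α] {k : ℕ} (f : Fin k → α) (a : α) :
    (List.ofFn f).count a = #{j | f j = a} := by
  rw [← Multiset.coe_count, ← Fin.univ_val_map, Multiset.count_map, card_def, filter_val]
  simp only [eq_comm]

theorem List.strictMonoOn_idxOf_ofFn {α : Type*} [LinearOrder α] {k : ℕ} {f : Fin k → α}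
    (h : ∀ a b, f b < f a → ∃ c < a, f c = f b) :
    StrictMonoOn (List.ofFn f).idxOf (Set.range f) := by
  rintro _ ⟨b, rfl⟩ _ ⟨a, rfl⟩ hlt
  have hmem : f a ∈ List.ofFn f := List.mem_ofFn.2 ⟨a, rfl⟩
  have hi := List.idxOf_lt_length_iff.2 hmem
  set i : Fin k := ⟨(List.ofFn f).idxOf (f a), by simpa using hi⟩
  have hfi : f i = f a := by simpa only [List.getElem_ofFn] using List.getElem_idxOf hi
  obtain ⟨c, hci, hc⟩ := h i b (hfi ▸ hlt)
  calc (List.ofFn f).idxOf (f b) ≤ c := List.idxOf_le_of_getElem_eq (by simp) (by simpa using hc)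
    _ < i := hci

section DenseRank

variable {α β γ : Type*} [Fintype α] [LinearOrder β] [LinearOrder γ]

theorem Finset.strictMonoOn_card_filter_le (s : Finset β) :
    StrictMonoOn (fun y => #{x ∈ s | x ≤ y}) s := by
  intro y _ y' hy' hlt
  have hsub : {x ∈ s | x ≤ y} ⊆ {x ∈ s | x ≤ y'} := fun x hx =>
    mem_filter.2 ⟨(mem_filter.1 hx).1, (mem_filter.1 hx).2.trans hlt.le⟩
  exact card_lt_card ((ssubset_iff_of_subset hsub).2
    ⟨y', mem_filter.2 ⟨hy', le_rfl⟩, fun h => (mem_filter.1 h).2.not_gt hlt⟩)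

def denseRank (μ : α → β) (a : α) : ℕ := #{b ∈ univ.image μ | b ≤ μ a}

variable (μ : α → β)

theorem denseRank_lt_denseRank_iff {a b : α} : denseRank μ a < denseRank μ b ↔ μ a < μ b :=
  (strictMonoOn_card_filter_le _).lt_iff_lt (mem_image_of_mem _ (mem_univ a))
    (mem_image_of_mem _ (mem_univ b))

theorem denseRank_eq_denseRank_iff {a b : α} : denseRank μ a = denseRank μ b ↔ μ a = μ b :=
  (strictMonoOn_card_filter_le _).injOn.eq_iff (mem_image_of_mem _ (mem_univ a))
    (mem_image_of_mem _ (mem_univ b))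

theorem denseRank_comp {φ : β → γ} (hφ : StrictMonoOn φ (Set.range μ)) :
    denseRank (φ ∘ μ) = denseRank μ := by
  funext a
  rw [denseRank, ← image_image, filter_image,
    card_image_of_injOn (hφ.injOn.mono fun x hx => by simp at hx; exact hx.1), denseRank]
  congr 1
  exact filter_congr fun y hy => hφ.le_iff_le (by simpa using hy) ⟨a, rfl⟩

theorem image_denseRank : univ.image (denseRank μ) = Icc 1 #(univ.image μ) := by
  rw [show denseRank μ = (fun y => #{x ∈ univ.image μ | x ≤ y}) ∘ μ from rfl,
    ← image_image]
  refine eq_of_subset_of_card_le (fun r hr => ?_) ?_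
  · obtain ⟨y, hy, rfl⟩ := mem_image.1 hr
    exact mem_Icc.2 ⟨card_pos.2 ⟨y, mem_filter.2 ⟨hy, le_rfl⟩⟩, card_filter_le _ _⟩
  · rw [card_image_of_injOn (strictMonoOn_card_filter_le _).injOn, Nat.card_Icc,
      add_tsub_cancel_right]

theorem card_image_denseRank : #(univ.image (denseRank μ)) = #(univ.image μ) := by
  rw [image_denseRank, Nat.card_Icc, add_tsub_cancel_right]

theorem denseRank_eq_self {g : α → ℕ} {M : ℕ} (hg : univ.image g = Icc 1 M) (a : α) :
    denseRank g a = g a := by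
  have ha : g a ∈ Icc 1 M := hg ▸ mem_image_of_mem g (mem_univ a)
  have hfilter : {x ∈ Icc 1 M | x ≤ g a} = Icc 1 (g a) := by
    ext x
    simp only [mem_filter, mem_Icc]
    exact ⟨fun h => ⟨h.1.1, h.2⟩, fun h => ⟨⟨h.1, h.2.trans (mem_Icc.1 ha).2⟩, h.2⟩⟩
  rw [denseRank, hg, hfilter, Nat.card_Icc, add_tsub_cancel_right]

end DenseRank

namespace Finpartition

section BlockRank

variable {α : Type*} [Fintype α] [LinearOrder α] (P : Finpartition (univ : Finset α))

theorem image_part_univ : univ.image P.part = P.parts := by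
  ext p
  refine ⟨fun hp => ?_, fun hp => ?_⟩
  · obtain ⟨a, -, rfl⟩ := mem_image.1 hp
    exact P.part_mem.2 (mem_univ a)
  · obtain ⟨a, ha⟩ := P.nonempty_of_mem_parts hp
    exact mem_image.2 ⟨a, mem_univ a, P.part_eq_of_mem hp ha⟩

def blockMin (a : α) : α := (P.part a).min' (P.part_nonempty.2 (mem_univ a))

theorem blockMin_mem_part (a : α) : P.blockMin a ∈ P.part a := min'_mem _ _

theorem blockMin_le (a : α) : P.blockMin a ≤ a := min'_le _ _ (P.mem_part (mem_univ a))

theorem part_blockMin (a : α) : P.part (P.blockMin a) = P.part a :=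
  P.part_eq_of_mem (P.part_mem.2 (mem_univ a)) (P.blockMin_mem_part a)

theorem blockMin_eq_blockMin_iff {a b : α} :
    P.blockMin a = P.blockMin b ↔ P.part a = P.part b := by
  refine ⟨fun h => by rw [← P.part_blockMin a, h, P.part_blockMin], fun h => ?_⟩
  simp only [blockMin, h]

theorem card_image_blockMin : #(univ.image P.blockMin) = #P.parts := by
  have hinj : Set.InjOn P.part ↑(univ.image P.blockMin) := by
    rintro _ ha _ hb h
    obtain ⟨a, -, rfl⟩ := mem_image.1 ha
    obtain ⟨b, -, rfl⟩ := mem_image.1 hb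
    rwa [P.part_blockMin, P.part_blockMin, ← P.blockMin_eq_blockMin_iff] at h
  rw [← card_image_of_injOn hinj, image_image, ← P.image_part_univ]
  congr 1
  exact image_congr fun a _ => P.part_blockMin a

def blockRank : α → ℕ := denseRank P.blockMin

theorem blockRank_eq_blockRank_iff {a b : α} :
    P.blockRank a = P.blockRank b ↔ P.part a = P.part b :=
  (denseRank_eq_denseRank_iff _).trans P.blockMin_eq_blockMin_iff

theorem blockRank_eq_blockRank_iff_mem {a b : α} :
    P.blockRank a = P.blockRank b ↔ b ∈ P.part a :=
  P.blockRank_eq_blockRank_iff.trans <|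
    eq_comm.trans (P.part_eq_iff_mem (P.part_mem.2 (mem_univ a)))

theorem image_blockRank : univ.image P.blockRank = Icc 1 #P.parts := by
  rw [blockRank, image_denseRank, card_image_blockMin]

theorem exists_lt_blockRank_eq {a b : α} (h : P.blockRank b < P.blockRank a) :
    ∃ c < a, P.blockRank c = P.blockRank b := by
  refine ⟨P.blockMin b, ?_, P.blockRank_eq_blockRank_iff.2 (P.part_blockMin b)⟩
  calc P.blockMin b < P.blockMin a := (denseRank_lt_denseRank_iff _).1 h
    _ ≤ a := P.blockMin_le a

theorem ext_of_blockRank_eq {Q : Finpartition (univ : Finset α)}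
    (h : P.blockRank = Q.blockRank) : P = Q := by
  have hpart : P.part = Q.part := by
    funext a
    ext b
    rw [← blockRank_eq_blockRank_iff_mem, ← blockRank_eq_blockRank_iff_mem, h]
  ext p
  rw [← P.image_part_univ, ← Q.image_part_univ, hpart]

theorem card_filter_blockRank_eq (a : α) :
    #{b | P.blockRank b = P.blockRank a} = #(P.part a) := by
  congr 1
  ext b
  rw [mem_filter, eq_comm, blockRank_eq_blockRank_iff_mem]
  simp

end BlockRank

theorem mem_Icc_card_of_card_le {α : Type*} [DecidableEq α] {s : Finset α} (P : Finpartition s)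
    {c : ℕ} (h : ∀ p ∈ P.parts, #p ≤ c) : #s ∈ Icc #P.parts (c * #P.parts) := by
  refine mem_Icc.2 ⟨P.card_parts_le_card, ?_⟩
  rw [← P.sum_card_parts, mul_comm]
  simpa using sum_le_card_nsmul _ _ _ h

def fibers {α β : Type*} [Fintype α] [DecidableEq α] [DecidableEq β] (f : α → β) :
    Finpartition (univ : Finset α) :=
  ofSetoid (Setoid.ker f)

theorem mem_part_fibers {α β : Type*} [Fintype α] [DecidableEq α] [DecidableEq β]
    {f : α → β} {a b : α} : b ∈ (fibers f).part a ↔ f a = f b :=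
  mem_part_ofSetoid_iff_rel.trans Setoid.ker_def

end Finpartition

open Finpartition

theorem List.val_blockMin_fibers_get {α : Type*} [DecidableEq α] (L : List α)
    (j : Fin L.length) : ((fibers L.get).blockMin j : ℕ) = L.idxOf (L.get j) := by
  have hlt : L.idxOf (L.get j) < L.length := List.idxOf_lt_length_iff.2 (List.get_mem L j)
  refine le_antisymm ?_ ?_
  · refine min'_le _ (⟨L.idxOf (L.get j), hlt⟩ : Fin L.length) (mem_part_fibers.2 ?_)
    simp
  · refine List.idxOf_le_of_getElem_eq (Fin.isLt _) ?_
    exact (mem_part_fibers.1 ((fibers L.get).blockMin_mem_part j)).symm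

structure List.IsRestrictedGrowth (m : ℕ) (L : List ℕ) : Prop where
  mem_iff : ∀ x, x ∈ L ↔ x ∈ Set.Icc 1 m
  strictMonoOn_idxOf : StrictMonoOn L.idxOf (Set.Icc 1 m)

namespace List.IsRestrictedGrowth

variable {m : ℕ} {L : List ℕ}

theorem image_get (h : L.IsRestrictedGrowth m) : univ.image L.get = Icc 1 m := by
  ext x
  rw [mem_image, mem_Icc, ← Set.mem_Icc, ← h.mem_iff, List.mem_iff_get]
  simp

/- The block of the value `v` has least element `L.idxOf v`, which increases with `v`, so ranking
the blocks by their least elements gives back the values. -/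
theorem blockRank_fibers_get (h : L.IsRestrictedGrowth m) :
    (fibers L.get).blockRank = L.get := by
  have hval : (fibers L.get).blockRank = denseRank (Fin.val ∘ (fibers L.get).blockMin) :=
    (denseRank_comp _ (Fin.val_strictMono.strictMonoOn _)).symm
  have hidx : Fin.val ∘ (fibers L.get).blockMin = L.idxOf ∘ L.get :=
    funext L.val_blockMin_fibers_get
  have hrange : Set.range L.get ⊆ Set.Icc 1 m := by
    rintro _ ⟨j, rfl⟩; exact (h.mem_iff _).1 (L.get_mem j)
  funext j
  rw [hval, hidx, denseRank_comp _ (h.strictMonoOn_idxOf.mono hrange),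
    denseRank_eq_self h.image_get]

theorem card_parts_fibers_get (h : L.IsRestrictedGrowth m) : #(fibers L.get).parts = m := by
  rw [← card_image_blockMin, ← card_image_denseRank, ← blockRank, h.blockRank_fibers_get,
    h.image_get, Nat.card_Icc, add_tsub_cancel_right]

theorem head?_append (h : L.IsRestrictedGrowth m) : (L ++ [m + 1]).head? = some 1 := by
  cases L with
  | nil =>
    have : m = 0 := by
      by_contra hm
      simpa using ((h.mem_iff 1).2 ⟨le_rfl, Nat.one_le_iff_ne_zero.2 hm⟩)
    simp [this]
  | cons a t =>
    have ha := (h.mem_iff a).1 List.mem_cons_self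
    suffices ¬ 1 < a by simpa using le_antisymm (not_lt.1 this) ha.1
    intro h1a
    have := h.strictMonoOn_idxOf ⟨le_rfl, h1a.le.trans ha.2⟩ ha h1a
    simp at this

end List.IsRestrictedGrowth

theorem Finpartition.isRestrictedGrowth_ofFn_blockRank {k m : ℕ}
    (P : Finpartition (univ : Finset (Fin k))) (hm : #P.parts = m) :
    (List.ofFn P.blockRank).IsRestrictedGrowth m := by
  subst hm
  have hrange : Set.range P.blockRank = Set.Icc 1 #P.parts := by
    rw [← coe_Icc, ← P.image_blockRank, coe_image, coe_univ, Set.image_univ]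
  refine ⟨fun x => ?_, ?_⟩
  · rw [List.mem_ofFn, ← hrange, Set.mem_range]
  · rw [← hrange]
    exact List.strictMonoOn_idxOf_ofFn fun a b => P.exists_lt_blockRank_eq

theorem Finpartition.count_ofFn_blockRank_le {k c : ℕ}
    (P : Finpartition (univ : Finset (Fin k))) (h : ∀ p ∈ P.parts, #p ≤ c) (x : ℕ) :
    (List.ofFn P.blockRank).count x ≤ c := by
  rw [List.count_ofFn]
  by_cases hx : ∃ a, P.blockRank a = x
  · obtain ⟨a, rfl⟩ := hx
    rw [P.card_filter_blockRank_eq]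
    exact h _ (P.part_mem.2 (mem_univ a))
  · rw [not_exists] at hx
    simp [hx]

theorem List.card_le_of_mem_parts_fibers_get {α : Type*} [DecidableEq α] {L : List α} {c : ℕ}
    (h : ∀ x, L.count x ≤ c) :
    ∀ p ∈ (fibers L.get).parts, #p ≤ c := by
  intro p hp
  rw [← image_part_univ] at hp
  obtain ⟨j, -, rfl⟩ := mem_image.1 hp
  calc #((fibers L.get).part j) = #{b | L.get b = L.get j} := by
        congr 1; ext b; simp [mem_part_fibers, eq_comm]
    _ = L.count (L.get j) := by rw [← List.count_ofFn, List.ofFn_get]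
    _ ≤ c := h _

def IsGiftExchangeScenario (σ n : ℕ) (l : List ℕ) : Prop :=
  (∀ x ∈ l, 1 ≤ x ∧ x ≤ n) ∧
  l.head? = some 1 ∧
  l.getLast? = some n ∧
  l.count n = 1 ∧
  (∀ i, 1 ≤ i → i ≤ n - 1 → 1 ≤ l.count i ∧ l.count i ≤ σ + 1) ∧
  (∀ i, 2 ≤ i → i ≤ n → l.idxOf (i - 1) < l.idxOf i)

theorem List.IsRestrictedGrowth.isGiftExchangeScenario_append {σ m : ℕ} {L : List ℕ}
    (h : L.IsRestrictedGrowth m) (hσ : ∀ x, L.count x ≤ σ + 1) :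
    IsGiftExchangeScenario σ (m + 1) (L ++ [m + 1]) := by
  have hlast : m + 1 ∉ L := fun hmem => by simpa using ((h.mem_iff _).1 hmem).2
  refine ⟨fun x hx => ?_, h.head?_append, by simp, by simp [List.count_eq_zero.2 hlast],
    fun i hi1 him => ?_, fun i hi2 him => ?_⟩
  · rcases List.mem_append.1 hx with hx | hx
    · have := (h.mem_iff x).1 hx; exact ⟨this.1, this.2.trans m.le_succ⟩
    · simp at hx; omega
  · have hi : i ∈ L := (h.mem_iff i).2 ⟨hi1, by simpa using him⟩
    rw [List.count_append, List.count_singleton, if_neg (by simp at him ⊢; omega), add_zero]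
    exact ⟨List.count_pos_iff.2 hi, hσ i⟩
  · have hprev : i - 1 ∈ L := (h.mem_iff _).2 ⟨by omega, by omega⟩
    rw [List.idxOf_append_of_mem hprev]
    rcases (Nat.lt_or_ge i (m + 1)) with hi | hi
    · have hi' : i ∈ L := (h.mem_iff _).2 ⟨by omega, by omega⟩
      rw [List.idxOf_append_of_mem hi']
      exact h.strictMonoOn_idxOf ⟨by omega, by omega⟩ ⟨by omega, by omega⟩ (by omega)
    · obtain rfl : i = m + 1 := by omega
      rw [List.idxOf_append_of_notMem hlast, List.idxOf_cons_self, add_zero]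
      exact List.idxOf_lt_length_iff.2 hprev

theorem IsGiftExchangeScenario.isRestrictedGrowth_of_append {σ m : ℕ} {L : List ℕ}
    (h : IsGiftExchangeScenario σ (m + 1) (L ++ [m + 1])) :
    L.IsRestrictedGrowth m ∧ ∀ x, L.count x ≤ σ + 1 := by
  obtain ⟨hmem, -, -, hcount, hcounts, hidx⟩ := h
  have hcount_append : ∀ x, x ≠ m + 1 → (L ++ [m + 1]).count x = L.count x := fun x hx => by
    rw [List.count_append, List.count_singleton, if_neg (by simpa using hx.symm), add_zero]
  have hlast : m + 1 ∉ L := by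
    rw [List.count_append, List.count_singleton_self] at hcount
    exact List.count_eq_zero.1 (by omega)
  have hmem_iff : ∀ x, x ∈ L ↔ x ∈ Set.Icc 1 m := fun x => by
    refine ⟨fun hx => ?_, fun hx => ?_⟩
    · have := hmem x (List.mem_append_left _ hx)
      have : x ≠ m + 1 := fun h => hlast (h ▸ hx)
      exact ⟨by omega, by omega⟩
    · have := (hcounts x hx.1 (by simpa using hx.2)).1
      rw [hcount_append x (by have := hx.2; omega)] at this
      exact List.count_pos_iff.1 this
  refine ⟨⟨hmem_iff, strictMonoOn_of_lt_succ Set.ordConnected_Icc fun a _ ha ha1 => ?_⟩,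
    fun x => ?_⟩
  · rw [Order.succ_eq_add_one] at ha1 ⊢
    have := hidx (a + 1) (by have := ha.1; omega) (by have := ha1.2; omega)
    rwa [Nat.add_sub_cancel, List.idxOf_append_of_mem ((hmem_iff a).2 ha),
      List.idxOf_append_of_mem ((hmem_iff _).2 ha1)] at this
  · by_cases hx : x ∈ L
    · have hx' := (hmem_iff x).1 hx
      rw [← hcount_append x (by have := hx'.2; omega)]
      exact (hcounts x hx'.1 (by simpa using hx'.2)).2
    · simp [List.count_eq_zero.2 hx]

abbrev RestrictedGrowthWords (σ m : ℕ) :=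
  {L : List ℕ // L.IsRestrictedGrowth m ∧ ∀ x, L.count x ≤ σ + 1}

abbrev BoundedPartitions (σ m : ℕ) :=
  Σ k : Icc m ((σ + 1) * m),
    {P : Finpartition (univ : Finset (Fin k)) // #P.parts = m ∧ ∀ p ∈ P.parts, #p ≤ σ + 1}

def RestrictedGrowthWords.toScenario {σ m : ℕ} (L : RestrictedGrowthWords σ m) :
    {l // IsGiftExchangeScenario σ (m + 1) l} :=
  ⟨L.1 ++ [m + 1], L.2.1.isGiftExchangeScenario_append L.2.2⟩

def BoundedPartitions.toWord {σ m : ℕ} : BoundedPartitions σ m → RestrictedGrowthWords σ m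
  | ⟨_, P, hm, hσ⟩ =>
    ⟨List.ofFn P.blockRank, P.isRestrictedGrowth_ofFn_blockRank hm,
      P.count_ofFn_blockRank_le hσ⟩

theorem RestrictedGrowthWords.bijective_toScenario (σ m : ℕ) :
    Function.Bijective (toScenario : RestrictedGrowthWords σ m → _) := by
  refine ⟨fun L L' h => Subtype.ext (List.append_cancel_right (congrArg Subtype.val h)), ?_⟩
  rintro ⟨l, hl⟩
  have hsplit : l.dropLast ++ [m + 1] = l := List.dropLast_append_getLast? _ hl.2.2.1
  rw [← hsplit] at hl
  exact ⟨⟨l.dropLast, hl.isRestrictedGrowth_of_append⟩, Subtype.ext hsplit⟩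

theorem BoundedPartitions.bijective_toWord (σ m : ℕ) :
    Function.Bijective (toWord : BoundedPartitions σ m → _) := by
  refine ⟨?_, ?_⟩
  · rintro ⟨⟨k, hk⟩, P, hP, hPσ⟩ ⟨⟨k', hk'⟩, P', hP', hPσ'⟩ h
    have hofFn : List.ofFn P.blockRank = List.ofFn P'.blockRank := congrArg Subtype.val h
    obtain ⟨rfl, h⟩ := Sigma.mk.inj_iff.1 (List.ofFn_inj'.1 hofFn)
    obtain rfl := P.ext_of_blockRank_eq (eq_of_heq h)
    rfl
  · rintro ⟨L, hL, hσ⟩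
    have hparts := hL.card_parts_fibers_get
    have hsize := List.card_le_of_mem_parts_fibers_get hσ
    have hk : L.length ∈ Icc m ((σ + 1) * m) := by
      simpa [hparts] using (fibers L.get).mem_Icc_card_of_card_le hsize
    refine ⟨⟨⟨L.length, hk⟩, fibers L.get, hparts, hsize⟩, Subtype.ext ?_⟩
    simp only [toWord, hL.blockRank_fibers_get, List.ofFn_get]

theorem stmt_18 (σ n : ℕ) (hn : 1 ≤ n) :
    Nat.card {l : List ℕ //
        (∀ x ∈ l, 1 ≤ x ∧ x ≤ n) ∧
        l.head? = some 1 ∧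
        l.getLast? = some n ∧
        l.count n = 1 ∧
        (∀ i, 1 ≤ i → i ≤ n - 1 → 1 ≤ l.count i ∧ l.count i ≤ σ + 1) ∧
        (∀ i, 2 ≤ i → i ≤ n → l.idxOf (i - 1) < l.idxOf i)} =
      ∑ k ∈ Finset.Icc (n - 1) ((σ + 1) * (n - 1)), E σ (n - 1) k := by
  obtain ⟨m, rfl⟩ : ∃ m, n = m + 1 := ⟨n - 1, by omega⟩
  rw [Nat.add_sub_cancel]
  calc Nat.card {l // IsGiftExchangeScenario σ (m + 1) l}
      = Nat.card (RestrictedGrowthWords σ m) :=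
        (Nat.card_eq_of_bijective _ (RestrictedGrowthWords.bijective_toScenario σ m)).symm
    _ = Nat.card (BoundedPartitions σ m) :=
        (Nat.card_eq_of_bijective _ (BoundedPartitions.bijective_toWord σ m)).symm
    _ = ∑ k ∈ Icc m ((σ + 1) * m), E σ m k := by
        rw [Nat.card_sigma]
        exact sum_coe_sort (Icc m ((σ + 1) * m)) (E σ m)
end
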